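/- arXiv:math/0609417 — 7 statements merged into one kernel-verified Lean document; each statement's English description precedes it below -/
import Mathlib

section
/- Let F be a field, n ≥ 2, and ε ∈ F a primitive n-th root of unity. With X_a = diag(ε^{n-1}, …, ε, 1) and X_b the cyclic permutation matrix with (X_b)_{ij} = 1 iff j ≡ i+1 (mod n), define for each (i,j) ∈ Z_n × Z_n the one-dimensional subspace R_{(i,j)} = span(X_a^i X_b^j) of M_n(F). Then M_n(F) is the internal direct sum of the subspaces R_t, t ∈ Z_n × Z_n, and R_s · R_t ⊆ R_{s+t} for all s, t ∈ Z_n × Z_n; that is, this family of subspaces is a (Z_n × Z_n)-grading of the algebra M_n(F), called the ε-grading. -/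
/-!
The clock matrix `Xa` and the shift matrix `Xb` form a Weyl pair: `Xa ^ n = Xb ^ n = 1` and
`Xb * Xa = ε⁻¹ • (Xa * Xb)`. These relations give
`(Xa^i Xb^j) (Xa^k Xb^l) = ε^(-kj) Xa^(i+k) Xb^(j+l)`, which is the grading property.
The monomials `Xa^i Xb^j` are joint eigenvectors of the conjugations `X ↦ Xa^(n-1) X Xa` and
`X ↦ Xb X Xb^(n-1)`, with eigenvalues `ε^(-j)` and `ε^(-i)`. Distinct pairs `(i, j)` give distinct
pairs of eigenvalues, so the `n²` monomials are linearly independent, hence a basis of `M_n(F)`.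
-/

open Matrix

theorem linearIndependent_of_mem_eigenspace_prod {K V ι : Type*} [Field K] [AddCommGroup V]
    [Module K V] (f g : Module.End K V) {μ ν : ι → K} (hμ : Function.Injective μ)
    (hν : Function.Injective ν) {v : ι × ι → V} (hv : ∀ t, v t ≠ 0)
    (hf : ∀ t, v t ∈ f.eigenspace (μ t.1)) (hg : ∀ t, v t ∈ g.eigenspace (ν t.2)) :
    LinearIndependent K v := by
  let p : Bool → ι → Submodule K V := fun β => if β then f.eigenspace ∘ μ else g.eigenspace ∘ ν
  have hp : iSupIndep fun k : Bool → ι => ⨅ β, p β (k β) :=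
    iSupIndep.iInf p fun β => by
      cases β
      · exact (Module.End.eigenspaces_iSupIndep g).comp hν
      · exact (Module.End.eigenspaces_iSupIndep f).comp hμ
  have he : Function.Injective fun (t : ι × ι) (β : Bool) => if β then t.1 else t.2 :=
    fun s t hst => Prod.ext (congrFun hst true) (congrFun hst false)
  refine (hp.comp he).linearIndependent _ (fun t => ?_) hv
  simp only [Function.comp_apply, Submodule.mem_iInf, Bool.forall_bool]
  exact ⟨hg t, hf t⟩

section WeylPair

variable {F A : Type*} [Field F] [Ring A] [Algebra F A] {n : ℕ} {a b : A} {c : F}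

theorem mul_pow_eq_smul_pow_mul (h : b * a = c • (a * b)) (i : ℕ) :
    b * a ^ i = c ^ i • (a ^ i * b) := by
  induction i with
  | zero => simp
  | succ i ih =>
    rw [pow_succ, ← mul_assoc, ih, smul_mul_assoc, mul_assoc, h, mul_smul_comm, smul_smul,
      ← mul_assoc, pow_succ]

theorem pow_mul_pow_eq_smul_pow_mul_pow (h : b * a = c • (a * b)) (i j : ℕ) :
    b ^ j * a ^ i = c ^ (i * j) • (a ^ i * b ^ j) := by
  induction j with
  | zero => simp
  | succ j ih =>
    rw [pow_succ, mul_assoc, mul_pow_eq_smul_pow_mul h, mul_smul_comm, ← mul_assoc, ih,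
      smul_mul_assoc, smul_smul, mul_assoc, ← pow_succ, ← pow_add, mul_add_one, add_comm i]

theorem pow_val_add_of_pow_eq_one [NeZero n] {x : A} (hx : x ^ n = 1) (k l : ZMod n) :
    x ^ (k + l).val = x ^ k.val * x ^ l.val := by
  rw [ZMod.val_add, ← pow_eq_pow_mod _ hx, pow_add]

variable (a b) in
def weylMonomial (t : ZMod n × ZMod n) : A := a ^ t.1.val * b ^ t.2.val

variable [NeZero n] (ha : a ^ n = 1) (hb : b ^ n = 1) (h : b * a = c • (a * b))
include ha hb h

theorem weylMonomial_mul (s t : ZMod n × ZMod n) :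
    weylMonomial a b s * weylMonomial a b t =
      c ^ (t.1.val * s.2.val) • weylMonomial a b (s + t) := by
  simp only [weylMonomial, Prod.fst_add, Prod.snd_add, pow_val_add_of_pow_eq_one ha,
    pow_val_add_of_pow_eq_one hb]
  rw [mul_assoc, ← mul_assoc (b ^ _), pow_mul_pow_eq_smul_pow_mul_pow h, smul_mul_assoc,
    mul_smul_comm, mul_assoc, mul_assoc]

theorem span_weylMonomial_mul_le (s t : ZMod n × ZMod n) :
    Submodule.span F {weylMonomial a b s} * Submodule.span F {weylMonomial a b t} ≤
      Submodule.span F {weylMonomial a b (s + t)} := by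
  rw [Submodule.span_mul_span, Set.singleton_mul_singleton, Submodule.span_singleton_le_iff_mem,
    weylMonomial_mul ha hb h]
  exact Submodule.smul_mem _ _ (Submodule.mem_span_singleton_self _)

omit h in
theorem weylMonomial_ne_zero [Nontrivial A] (t : ZMod n × ZMod n) : weylMonomial a b t ≠ 0 :=
  (((IsUnit.of_pow_eq_one ha (NeZero.ne n)).pow _).mul
    ((IsUnit.of_pow_eq_one hb (NeZero.ne n)).pow _)).ne_zero

omit hb in
theorem mulLeftRight_pow_pred_self_weylMonomial (t : ZMod n × ZMod n) :
    LinearMap.mulLeftRight F (a ^ (n - 1), a) (weylMonomial a b t) =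
      c ^ t.2.val • weylMonomial a b t := by
  have : b ^ t.2.val * a = c ^ t.2.val • (a * b ^ t.2.val) := by
    simpa using pow_mul_pow_eq_smul_pow_mul_pow h 1 t.2.val
  rw [LinearMap.mulLeftRight_apply, weylMonomial, mul_assoc, mul_assoc (a ^ _), this,
    mul_smul_comm, mul_smul_comm, ← mul_assoc, ← mul_assoc, ← pow_add, ← pow_succ,
    add_right_comm (n - 1), Nat.sub_add_cancel NeZero.one_le, pow_add, ha, one_mul]

omit ha in
theorem mulLeftRight_self_pow_pred_weylMonomial (t : ZMod n × ZMod n) :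
    LinearMap.mulLeftRight F (b, b ^ (n - 1)) (weylMonomial a b t) =
      c ^ t.1.val • weylMonomial a b t := by
  rw [LinearMap.mulLeftRight_apply, weylMonomial, ← mul_assoc, mul_pow_eq_smul_pow_mul h,
    smul_mul_assoc, smul_mul_assoc, mul_assoc, mul_assoc, ← mul_assoc b, ← pow_succ', ← pow_add,
    add_assoc, Nat.add_sub_cancel' NeZero.one_le, pow_add, hb, mul_one]

theorem linearIndependent_weylMonomial [Nontrivial A] (hc : IsPrimitiveRoot c n) :
    LinearIndependent F (weylMonomial a b : ZMod n × ZMod n → A) := by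
  have hinj : Function.Injective fun k : ZMod n => c ^ k.val := fun k l hkl =>
    ZMod.val_injective n (hc.pow_inj (ZMod.val_lt k) (ZMod.val_lt l) hkl)
  refine linearIndependent_of_mem_eigenspace_prod (LinearMap.mulLeftRight F (b, b ^ (n - 1)))
    (LinearMap.mulLeftRight F (a ^ (n - 1), a)) hinj hinj (weylMonomial_ne_zero ha hb)
    (fun t => ?_) (fun t => ?_)
  · exact Module.End.mem_eigenspace_iff.mpr (mulLeftRight_self_pow_pred_weylMonomial hb h t)
  · exact Module.End.mem_eigenspace_iff.mpr (mulLeftRight_pow_pred_self_weylMonomial ha h t)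

theorem isInternal_span_weylMonomial [Nontrivial A] (hc : IsPrimitiveRoot c n)
    (hA : Module.finrank F A = n * n) :
    DirectSum.IsInternal fun t : ZMod n × ZMod n => Submodule.span F {weylMonomial a b t} := by
  have hli := linearIndependent_weylMonomial ha hb h hc
  refine DirectSum.isInternal_submodule_of_iSupIndep_of_iSup_eq_top
    hli.iSupIndep_span_singleton ?_
  rw [← Submodule.span_range_eq_iSup]
  exact hli.span_eq_top_of_card_eq_finrank (by simp [hA])

end WeylPair

section ClockShift

variable {F : Type*} [Field F] {n : ℕ} [NeZero n] {ε : F}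

variable (n) in
def clockMatrix (ε : F) : Matrix (Fin n) (Fin n) F :=
  diagonal fun i : Fin n => ε ^ (n - 1 - (i : ℕ))

variable (F n) in
def shiftMatrix : Matrix (Fin n) (Fin n) F := (Equiv.addRight (1 : Fin n)).permMatrix F

omit [NeZero n] in
theorem clockMatrix_pow_self (hε : ε ^ n = 1) : clockMatrix n ε ^ n = 1 := by
  rw [clockMatrix, diagonal_pow, ← diagonal_one]
  congr 1
  funext i
  rw [Pi.pow_apply, ← pow_mul, mul_comm, pow_mul, hε, one_pow]

theorem addRight_one_pow_self : Equiv.addRight (1 : Fin n) ^ n = 1 := by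
  have h : n • (1 : Fin n) = 0 := by simpa using card_nsmul_eq_zero (G := Fin n) (x := 1)
  ext k
  simp [h]

theorem shiftMatrix_pow_self : shiftMatrix F n ^ n = 1 := by
  rw [shiftMatrix, ← inv_inv (Equiv.addRight _), ← Matrix.permMatrixHom_apply, ← map_pow, inv_pow,
    addRight_one_pow_self, inv_one, map_one]

theorem shiftMatrix_eq_of_mod :
    shiftMatrix F n = of fun i j : Fin n => if (j : ℕ) % n = ((i : ℕ) + 1) % n then 1 else 0 := by
  ext i j
  simp [shiftMatrix, Fin.ext_iff, Fin.val_add, eq_comm, Nat.mod_eq_of_lt j.isLt]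

theorem pow_sub_one_sub_val_add_one (hε : ε ^ n = 1) (k : Fin n) :
    ε * ε ^ (n - 1 - ((k + 1 : Fin n) : ℕ)) = ε ^ (n - 1 - (k : ℕ)) := by
  by_cases hk : (k : ℕ) + 1 < n
  · rw [Fin.val_add_one_of_lt' hk, ← pow_succ']
    congr 1
    omega
  · have hkn : (k : ℕ) + 1 = n := by omega
    have hk1 : k + 1 = 0 := by
      rw [Fin.ext_iff, Fin.val_add, Fin.val_one', Fin.val_zero, Nat.add_mod_mod, hkn, Nat.mod_self]
    have hkv : (k : ℕ) = n - 1 := by omega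
    rw [hk1, Fin.val_zero, Nat.sub_zero, ← pow_succ', Nat.sub_add_cancel NeZero.one_le, hε,
      hkv, Nat.sub_self, pow_zero]

theorem shiftMatrix_mul_clockMatrix (hε : IsPrimitiveRoot ε n) :
    shiftMatrix F n * clockMatrix n ε = ε⁻¹ • (clockMatrix n ε * shiftMatrix F n) := by
  rw [eq_inv_smul_iff₀ (hε.ne_zero (NeZero.ne n))]
  ext k m
  simp [shiftMatrix, clockMatrix, PEquiv.toMatrix_toPEquiv_mul, diagonal_apply,
    pow_sub_one_sub_val_add_one hε.pow_eq_one]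

end ClockShift

/-- The subspaces `R_{(i,j)} = span(X_a^i X_b^j)`, for
`(i,j) ∈ Z_n × Z_n`, form a `Z_n × Z_n`-grading of `M_n(F)` (the ε-grading):
`M_n(F)` is their internal direct sum and `R_s · R_t ⊆ R_{s+t}`. -/
theorem stmt1 (F : Type*) [Field F] (n : ℕ) (hn : 2 ≤ n) (ε : F)
    (hε : IsPrimitiveRoot ε n)
    (Xa Xb : Matrix (Fin n) (Fin n) F)
    (hXa : Xa = Matrix.diagonal fun i : Fin n => ε ^ (n - 1 - (i : ℕ)))
    (hXb : Xb = Matrix.of fun i j : Fin n =>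
      if ((j : ℕ)) % n = ((i : ℕ) + 1) % n then (1 : F) else 0)
    (R : ZMod n × ZMod n → Submodule F (Matrix (Fin n) (Fin n) F))
    (hR : R = fun t => Submodule.span F {Xa ^ (t.1.val) * Xb ^ (t.2.val)}) :
    DirectSum.IsInternal R ∧
    ∀ s t : ZMod n × ZMod n, R s * R t ≤ R (s + t) := by
  have : NeZero n := ⟨by omega⟩
  obtain rfl : Xa = clockMatrix n ε := hXa
  obtain rfl : Xb = shiftMatrix F n := hXb.trans shiftMatrix_eq_of_mod.symm
  have hclock := clockMatrix_pow_self hε.pow_eq_one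
  have hshift : shiftMatrix F n ^ n = 1 := shiftMatrix_pow_self
  have hcomm := shiftMatrix_mul_clockMatrix hε
  subst hR
  exact ⟨isInternal_span_weylMonomial hclock hshift hcomm hε.inv
      (by simp [Module.finrank_matrix]),
    span_weylMonomial_mul_le hclock hshift hcomm⟩
end

section
/- Let F be a field, n ≥ 2, ε ∈ F a primitive n-th root of unity, and let R = M_n(F) carry the ε-grading by T = Z_n × Z_n with components R_{(i,j)} = span(X_a^i X_b^j). Let Φ ∈ M_n(F) be invertible and let φ : R → R be the antiautomorphism φ(X) = Φ^{-1} Xᵗ Φ. If φ(R_t) ⊆ R_t for every t ∈ T, then n = 2, and Φ is a nonzero scalar multiple of one of the four matrices I, X_a, X_b, X_a X_b. -/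
/-!
Testing `φ` on `X_a` and `X_b` gives `X_aᵀ Φ = c Φ X_a` and `X_bᵀ Φ = c' Φ X_b`. Writing
`X_a = diag d` with `d (k + 1) ε = d k`, the first equation says that `d i = c d j` whenever
`Φ i j ≠ 0`; as `X_b` is the matrix of the cyclic shift, the second says that `Φ i j ≠ 0`
forces `Φ (i + 1) (j - 1) ≠ 0`. Comparing `d` at these two entries gives `ε² = 1`, hence
`n = 2`. For `n = 2` the first equation forbids nonzero entries in both columns of a row, so
`Φ` is diagonal or antidiagonal, and the second equation makes it `[[p, 0], [0, ±p]]` or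
`[[0, q], [±q, 0]]`.
-/

open Matrix

namespace Matrix

variable {m F : Type*} [Fintype m] [DecidableEq m]

theorem exists_transpose_mul_eq_smul_mul_of_mem_span [CommRing F] {Φ x : Matrix m m F}
    (hΦ : IsUnit Φ) (h : Φ⁻¹ * xᵀ * Φ ∈ Submodule.span F {x}) :
    ∃ c : F, xᵀ * Φ = c • (Φ * x) := by
  obtain ⟨c, hc⟩ := Submodule.mem_span_singleton.mp h
  refine ⟨c, ?_⟩
  rw [← Matrix.mul_smul, hc, ← Matrix.mul_assoc, ← Matrix.mul_assoc,
    mul_nonsing_inv _ ((isUnit_iff_isUnit_det Φ).mp hΦ), Matrix.one_mul]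

theorem eq_mul_of_diagonal_transpose_mul_eq [CommRing F] [IsDomain F] {Φ : Matrix m m F}
    {d : m → F} {c : F} (h : (diagonal d)ᵀ * Φ = c • (Φ * diagonal d)) ⦃i j : m⦄
    (hij : Φ i j ≠ 0) : d i = c * d j := by
  have hij' := congrFun₂ h i j
  simp only [diagonal_transpose, diagonal_mul, mul_diagonal, smul_apply, smul_eq_mul] at hij'
  exact mul_right_cancel₀ hij (by linear_combination hij')

theorem apply_symm_eq_mul_of_transpose_mul_eq [CommSemiring F] {Φ : Matrix m m F}
    {σ : Equiv.Perm m} {c : F}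
    (h : σ.toPEquiv.toMatrixᵀ * Φ = c • (Φ * σ.toPEquiv.toMatrix)) (i j : m) :
    Φ (σ.symm i) j = c * Φ i (σ.symm j) := by
  rw [← PEquiv.toMatrix_symm, ← Equiv.toPEquiv_symm, PEquiv.toMatrix_toPEquiv_mul,
    PEquiv.mul_toMatrix_toPEquiv] at h
  simpa using congrFun₂ h i j

theorem of_val_mod_eq_val_add_one_mod_eq_toMatrix_addRight (n : ℕ) [NeZero n] [Zero F]
    [One F] :
    (of fun i j : Fin n => if (j : ℕ) % n = ((i : ℕ) + 1) % n then (1 : F) else 0) =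
      (Equiv.addRight 1).toPEquiv.toMatrix := by
  ext i j
  simp [PEquiv.toMatrix_apply, Fin.ext_iff, Fin.val_add, Nat.mod_eq_of_lt j.isLt, eq_comm]

theorem exists_eq_smul_of_fin_two [CommRing F] [IsDomain F] {Φ : Matrix (Fin 2) (Fin 2) F}
    {c : F} (hΦ : Φ ≠ 0) (hsupp : Φ 0 0 = 0 ∨ Φ 0 1 = 0)
    (hs : ∀ i j, Φ (i - 1) j = c * Φ i (j - 1)) :
    ∃ a : F, a ≠ 0 ∧ (Φ = a • 1 ∨ Φ = a • !![-1, 0; 0, 1] ∨ Φ = a • !![0, 1; 1, 0] ∨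
      Φ = a • !![0, -1; 1, 0]) := by
  have h10 : Φ 1 0 = c * Φ 0 1 := hs 0 0
  have h11 : Φ 1 1 = c * Φ 0 0 := hs 0 1
  have h00 : Φ 0 0 = c * Φ 1 1 := hs 1 0
  have h01 : Φ 0 1 = c * Φ 1 0 := hs 1 1
  have hc : c = 1 ∨ c = -1 := by
    rw [← sq_eq_one_iff]
    by_contra hc
    have hc' : 1 - c ^ 2 ≠ 0 := sub_ne_zero.mpr (Ne.symm hc)
    have hp : Φ 0 0 = 0 := (mul_eq_zero.mp
      (by linear_combination h00 + c * h11 : (1 - c ^ 2) * Φ 0 0 = 0)).resolve_left hc'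
    have hq : Φ 0 1 = 0 := (mul_eq_zero.mp
      (by linear_combination h01 + c * h10 : (1 - c ^ 2) * Φ 0 1 = 0)).resolve_left hc'
    exact hΦ (by ext i j; fin_cases i <;> fin_cases j <;> simp [hp, hq, h10, h11])
  rcases hsupp with hp | hq
  · have hq : Φ 0 1 ≠ 0 := fun hq =>
      hΦ (by ext i j; fin_cases i <;> fin_cases j <;> simp [hp, hq, h10, h11])
    rcases hc with rfl | rfl
    · exact ⟨Φ 0 1, hq, Or.inr <| Or.inr <| Or.inl <| by
        ext i j; fin_cases i <;> fin_cases j <;> simp [hp, h10, h11]⟩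
    · exact ⟨-Φ 0 1, neg_ne_zero.mpr hq, Or.inr <| Or.inr <| Or.inr <| by
        ext i j; fin_cases i <;> fin_cases j <;> simp [hp, h10, h11]⟩
  · have hp : Φ 0 0 ≠ 0 := fun hp =>
      hΦ (by ext i j; fin_cases i <;> fin_cases j <;> simp [hp, hq, h10, h11])
    rcases hc with rfl | rfl
    · exact ⟨Φ 0 0, hp, Or.inl <| by
        ext i j; fin_cases i <;> fin_cases j <;> simp [hq, h10, h11]⟩
    · exact ⟨-Φ 0 0, neg_ne_zero.mpr hp, Or.inr <| Or.inl <| by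
        ext i j; fin_cases i <;> fin_cases j <;> simp [hq, h10, h11]⟩

end Matrix

theorem pow_sub_one_sub_val_add_one_mul {M : Type*} [Monoid M] {ε : M} {n : ℕ} [NeZero n]
    (hε : ε ^ n = 1) (k : Fin n) :
    ε ^ (n - 1 - ((k + 1 : Fin n) : ℕ)) * ε = ε ^ (n - 1 - (k : ℕ)) := by
  obtain ⟨m, rfl⟩ := Nat.exists_eq_succ_of_ne_zero (NeZero.ne n)
  rw [Fin.val_add_one, ← pow_succ]
  split_ifs with hk
  · simp [hk, hε]
  · have := Fin.val_lt_last hk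
    congr 1
    omega

section

variable {ι G F : Type*} [CommRing F] {d : ι → F} {c : F}

theorem mul_eq_mul_of_apply_ne_zero {Φ : ι → ι → F}
    (hd : ∀ ⦃i j⦄, Φ i j ≠ 0 → d i = c * d j) {i j k l : ι} (hij : Φ i j ≠ 0)
    (hkl : Φ k l ≠ 0) : d i * d l = d k * d j := by
  rw [hd hij, hd hkl]
  ring

variable [IsDomain F] [AddGroup G] {Φ : G → G → F} {d : G → F} {g : G} {ε : F}

theorem eq_one_of_ne_zero_of_ne_zero_add (hd : ∀ ⦃i j⦄, Φ i j ≠ 0 → d i = c * d j)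
    (hstep : ∀ k, d (k + g) * ε = d k) (hd0 : ∀ k, d k ≠ 0) {i j : G} (h₁ : Φ i j ≠ 0)
    (h₂ : Φ i (j + g) ≠ 0) : ε = 1 := by
  have h := mul_eq_mul_of_apply_ne_zero hd h₁ h₂
  rw [← hstep j] at h
  exact mul_left_cancel₀ (mul_ne_zero (hd0 i) (hd0 (j + g))) (by linear_combination -h)

theorem sq_eq_one_of_ne_zero_of_ne_zero_add_sub (hd : ∀ ⦃i j⦄, Φ i j ≠ 0 → d i = c * d j)
    (hstep : ∀ k, d (k + g) * ε = d k) (hd0 : ∀ k, d k ≠ 0) {i j : G} (h₁ : Φ i j ≠ 0)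
    (h₂ : Φ (i + g) (j - g) ≠ 0) : ε ^ 2 = 1 := by
  have h := mul_eq_mul_of_apply_ne_zero hd h₁ h₂
  rw [← hstep i, ← hstep (j - g), sub_add_cancel] at h
  exact mul_left_cancel₀ (mul_ne_zero (hd0 (i + g)) (hd0 j)) (by linear_combination h)

end

/-- If the antiautomorphism `φ(X) = Φ⁻¹ Xᵗ Φ` of `M_n(F)` preserves
every component of the ε-grading by `Z_n × Z_n`, then `n = 2` and `Φ` is a nonzero
scalar multiple of one of `I`, `X_a`, `X_b`, `X_a X_b`. -/
theorem stmt3 (F : Type*) [Field F] (n : ℕ) (hn : 2 ≤ n) (ε : F)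
    (hε : IsPrimitiveRoot ε n)
    (Xa Xb : Matrix (Fin n) (Fin n) F)
    (hXa : Xa = Matrix.diagonal fun i : Fin n => ε ^ (n - 1 - (i : ℕ)))
    (hXb : Xb = Matrix.of fun i j : Fin n =>
      if ((j : ℕ)) % n = ((i : ℕ) + 1) % n then (1 : F) else 0)
    (R : ZMod n × ZMod n → Submodule F (Matrix (Fin n) (Fin n) F))
    (hR : R = fun t => Submodule.span F {Xa ^ (t.1.val) * Xb ^ (t.2.val)})
    (Φ : Matrix (Fin n) (Fin n) F) (hΦ : IsUnit Φ)
    (hgr : ∀ t : ZMod n × ZMod n, ∀ x ∈ R t, Φ⁻¹ * xᵀ * Φ ∈ R t) :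
    n = 2 ∧ ∃ c : F, c ≠ 0 ∧
      (Φ = c • (1 : Matrix (Fin n) (Fin n) F) ∨ Φ = c • Xa ∨ Φ = c • Xb ∨
        Φ = c • (Xa * Xb)) := by
  have : NeZero n := ⟨by omega⟩
  have : Fact (1 < n) := ⟨hn⟩
  have hgen (t : ZMod n × ZMod n) : ∃ c : F, (Xa ^ t.1.val * Xb ^ t.2.val)ᵀ * Φ =
      c • (Φ * (Xa ^ t.1.val * Xb ^ t.2.val)) :=
    exists_transpose_mul_eq_smul_mul_of_mem_span hΦ <| by
      subst hR
      exact hgr t _ (Submodule.mem_span_singleton_self _)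
  obtain ⟨c, hc⟩ := hgen (1, 0)
  obtain ⟨c', hc'⟩ := hgen (0, 1)
  simp only [ZMod.val_one, ZMod.val_zero, pow_one, pow_zero, mul_one, one_mul] at hc hc'
  rw [hXa] at hc
  rw [hXb, of_val_mod_eq_val_add_one_mod_eq_toMatrix_addRight] at hc'
  have hd := eq_mul_of_diagonal_transpose_mul_eq hc
  have hs := apply_symm_eq_mul_of_transpose_mul_eq hc'
  have hstep := pow_sub_one_sub_val_add_one_mul hε.pow_eq_one
  have hd0 (k : Fin n) : ε ^ (n - 1 - (k : ℕ)) ≠ 0 := pow_ne_zero _ (hε.ne_zero (by omega))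
  obtain ⟨i, j, hij⟩ : ∃ i j, Φ i j ≠ 0 := by
    by_contra! h
    exact hΦ.ne_zero (Matrix.ext h)
  have hshift : Φ (i + 1) (j - 1) ≠ 0 := fun h =>
    hij (by simpa [← sub_eq_add_neg, h] using hs (i + 1) j)
  obtain rfl : n = 2 := le_antisymm (Nat.le_of_dvd two_pos (hε.dvd_of_pow_eq_one 2
    (sq_eq_one_of_ne_zero_of_ne_zero_add_sub hd hstep hd0 hij hshift))) hn
  have hsupp : Φ 0 0 = 0 ∨ Φ 0 1 = 0 := by
    by_contra! h
    exact hε.ne_one one_lt_two (eq_one_of_ne_zero_of_ne_zero_add hd hstep hd0 h.1 h.2)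
  obtain ⟨a, ha, hΦa⟩ :=
    exists_eq_smul_of_fin_two hΦ.ne_zero hsupp (by simpa [sub_eq_add_neg] using hs)
  have hXa2 : Xa = !![-1, 0; 0, 1] := by
    subst hXa
    ext i j
    fin_cases i <;> fin_cases j <;> simp [hε.eq_neg_one_of_two_right]
  have hXb2 : Xb = !![0, 1; 1, 0] := by
    subst hXb
    ext i j
    fin_cases i <;> fin_cases j <;> simp
  refine ⟨rfl, a, ha, ?_⟩
  simpa [hXa2, hXb2] using hΦa
end

section
/- Let F be a field of characteristic different from 2, G an abelian group, and let R = M_n(F) carry the elementary G-grading defined by (g_1, …, g_n) ∈ G^n. Let Φ ∈ M_n(F) be invertible with Φᵗ = Φ, and suppose the involution X ↦ Φ^{-1} Xᵗ Φ satisfies (R_g)^* ⊆ R_g for every g ∈ G. Then there exist h ∈ G and a permutation σ of {1, …, n} with σ ∘ σ = id such that g_i g_{σ(i)} = h for all i. -/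
/-!
Applying the involution to the matrix unit `E_pq` gives the matrix with `(k, l)` entry
`(Φ⁻¹)_kq Φ_pl`; as it lies in the component of degree `g_p⁻¹ g_q`, every pair of entries
`(Φ⁻¹)_kq ≠ 0 ≠ Φ_pl` forces `g_p g_l = g_k g_q`. Fixing one nonzero entry of `Φ⁻¹` yields a
constant `h` with `g_p g_l = h` whenever `Φ_pl ≠ 0`, and a nonzero term of the Leibniz expansion
of `det Φ` yields a permutation `τ` with `g_τ(i) = g_i⁻¹ h`. So `τ` carries `g` to the
involution `b ↦ b⁻¹ h` of `G`, and it is rearranged into an involutive permutation doing the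
same: for a linear order on `G`, use `τ` on the indices with `g_i < g_i⁻¹ h`, `τ⁻¹` on those
with `g_i > g_i⁻¹ h`, and the identity on the rest.
-/

open Matrix Function

theorem Equiv.Perm.exists_involutive_semiconj {α β : Type*} (f : α → β) {ι : β → β}
    (hι : Involutive ι) (τ : Equiv.Perm α) (hτ : Semiconj f τ ι) :
    ∃ σ : Equiv.Perm α, Involutive σ ∧ Semiconj f σ ι := by
  classical
  let _ : LinearOrder β := linearOrderOfSTO WellOrderingRel
  have hτ_symm : Semiconj f τ.symm ι := hτ.inverses_right τ.apply_symm_apply hι.leftInverse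
  let s : α → α := fun a =>
    if f a < ι (f a) then τ a else if ι (f a) < f a then τ.symm a else a
  have hs : ∀ a, s (s a) = a ∧ f (s a) = ι (f a) := by
    intro a
    rcases lt_trichotomy (f a) (ι (f a)) with hlt | heq | hgt
    · simp [s, hlt, hlt.not_gt, hτ a, hι (f a)]
    · simp [s, ← heq]
    · simp [s, hgt, hgt.not_gt, hτ_symm a, hι (f a)]
  exact ⟨Involutive.toPerm s fun a => (hs a).1, fun a => (hs a).1, fun a => (hs a).2⟩

theorem Matrix.exists_perm_forall_apply_ne_zero {m R : Type*} [Fintype m] [DecidableEq m]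
    [CommRing R] {A : Matrix m m R} (hA : A.det ≠ 0) : ∃ τ : Equiv.Perm m, ∀ i, A (τ i) i ≠ 0 := by
  by_contra! h
  refine hA (det_apply A ▸ Finset.sum_eq_zero fun τ _ => ?_)
  obtain ⟨i, hi⟩ := h τ
  exact smul_eq_zero_of_right _ (Finset.prod_eq_zero (Finset.mem_univ i) hi)

theorem Matrix.mul_transpose_single_mul_apply {m R : Type*} [Fintype m] [DecidableEq m]
    [CommSemiring R] (A B : Matrix m m R) (p q u v : m) (c : R) :
    (A * (single p q c)ᵀ * B) u v = A u q * c * B p v := by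
  simp [transpose_single, mul_apply, single_apply, ite_and]

section ElementaryGrading

variable (F : Type*) {m G : Type*} [DecidableEq m] [Group G]

def elementaryGradingComponent [Semiring F] (g : m → G) (a : G) : Submodule F (Matrix m m F) :=
  Submodule.span F {x | ∃ i j : m, (g i)⁻¹ * g j = a ∧ x = single i j (1 : F)}

variable {F} {g : m → G}

theorem single_mem_elementaryGradingComponent [Semiring F] (i j : m) :
    single i j (1 : F) ∈ elementaryGradingComponent F g ((g i)⁻¹ * g j) :=
  Submodule.subset_span ⟨i, j, rfl, rfl⟩

theorem apply_eq_zero_of_mem_elementaryGradingComponent [Semiring F] {a : G}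
    {M : Matrix m m F} (hM : M ∈ elementaryGradingComponent F g a) {k l : m}
    (hkl : (g k)⁻¹ * g l ≠ a) : M k l = 0 := by
  induction hM using Submodule.span_induction with
  | mem x hx =>
    obtain ⟨i, j, rfl, rfl⟩ := hx
    apply single_apply_of_ne
    rintro ⟨rfl, rfl⟩
    exact hkl rfl
  | zero => rfl
  | add x y _ _ hx hy => simp [hx, hy]
  | smul c x _ hx => simp [hx]

def PreservesElementaryGrading [Fintype m] [Field F] (g : m → G) (Φ : Matrix m m F) : Prop :=
  ∀ a : G, ∀ x ∈ elementaryGradingComponent F g a, Φ⁻¹ * xᵀ * Φ ∈ elementaryGradingComponent F g a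

end ElementaryGrading

theorem PreservesElementaryGrading.mul_eq_mul {F m G : Type*} [Field F] [Fintype m]
    [DecidableEq m] [CommGroup G] {g : m → G} {Φ : Matrix m m F}
    (hΦ : PreservesElementaryGrading g Φ) {p q k l : m} (hkq : Φ⁻¹ k q ≠ 0) (hpl : Φ p l ≠ 0) :
    g p * g l = g k * g q := by
  have hentry : (Φ⁻¹ * (single p q (1 : F))ᵀ * Φ) k l ≠ 0 := by
    rw [mul_transpose_single_mul_apply, mul_one]
    exact mul_ne_zero hkq hpl
  have hdeg : (g k)⁻¹ * g l = (g p)⁻¹ * g q :=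
    not_imp_comm.1 (apply_eq_zero_of_mem_elementaryGradingComponent
      (hΦ _ _ (single_mem_elementaryGradingComponent p q))) hentry
  rw [← div_eq_inv_mul, ← div_eq_inv_mul, div_eq_div_iff_mul_eq_mul] at hdeg
  rw [mul_comm, hdeg, mul_comm]

theorem stmt7_general (F : Type*) [Field F]
    (G : Type*) [CommGroup G]
    (n : ℕ) (g : Fin n → G)
    (R : G → Submodule F (Matrix (Fin n) (Fin n) F))
    (hR : R = fun a => Submodule.span F
      {x | ∃ i j : Fin n, (g i)⁻¹ * g j = a ∧ x = Matrix.single i j (1 : F)})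
    (Φ : Matrix (Fin n) (Fin n) F) (hΦ : IsUnit Φ)
    (hgr : ∀ a : G, ∀ x ∈ R a, Φ⁻¹ * xᵀ * Φ ∈ R a) :
    ∃ (h : G) (σ : Equiv.Perm (Fin n)),
      (∀ i, σ (σ i) = i) ∧ ∀ i, g i * g (σ i) = h := by
  subst hR
  have hpres : PreservesElementaryGrading g Φ := hgr
  rcases isEmpty_or_nonempty (Fin n) with _ | ⟨⟨q⟩⟩
  · exact ⟨1, 1, isEmptyElim, isEmptyElim⟩
  have hdet : IsUnit Φ.det := (isUnit_iff_isUnit_det Φ).1 hΦ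
  obtain ⟨τ, hτ⟩ := exists_perm_forall_apply_ne_zero hdet.ne_zero
  obtain ⟨κ, hκ⟩ := exists_perm_forall_apply_ne_zero (isUnit_nonsing_inv_det Φ hdet).ne_zero
  set h := g (κ q) * g q
  have hgτ : Semiconj g τ fun b => b⁻¹ * h := fun i =>
    eq_inv_mul_iff_mul_eq.2 (mul_comm (g i) _ ▸ hpres.mul_eq_mul (hκ q) (hτ i))
  have hι : Involutive fun b : G => b⁻¹ * h := fun b => by simp
  obtain ⟨σ, hσ, hgσ⟩ := Equiv.Perm.exists_involutive_semiconj g hι τ hgτ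
  exact ⟨h, σ, hσ, fun i => by rw [hgσ i, mul_inv_cancel_left]⟩

/-- If a transpose involution `X ↦ Φ⁻¹ Xᵗ Φ` (`Φ` invertible symmetric,
char F ≠ 2, `G` abelian) preserves every component of the elementary `G`-grading of
`M_n(F)` defined by `(g_1, …, g_n)`, then there exist `h ∈ G` and an involutive
permutation `σ` of `{1, …, n}` with `g_i g_{σ(i)} = h` for all `i`. -/
theorem stmt7 (F : Type*) [Field F] (hchar : (2 : F) ≠ 0)
    (G : Type*) [CommGroup G]
    (n : ℕ) (g : Fin n → G)
    (R : G → Submodule F (Matrix (Fin n) (Fin n) F))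
    (hR : R = fun a => Submodule.span F
      {x | ∃ i j : Fin n, (g i)⁻¹ * g j = a ∧ x = Matrix.single i j (1 : F)})
    (Φ : Matrix (Fin n) (Fin n) F) (hΦ : IsUnit Φ) (hsymm : Φᵀ = Φ)
    (hgr : ∀ a : G, ∀ x ∈ R a, Φ⁻¹ * xᵀ * Φ ∈ R a) :
    ∃ (h : G) (σ : Equiv.Perm (Fin n)),
      (∀ i, σ (σ i) = i) ∧ ∀ i, g i * g (σ i) = h :=
  stmt7_general F G n g R hR Φ hΦ hgr
end

section
/- Let F be a field of characteristic different from 2, G an abelian group, and let R = M_n(F) carry the elementary G-grading defined by (g_1, …, g_n) ∈ G^n. Let Φ ∈ M_n(F) be invertible with Φᵗ = −Φ, and suppose the involution X ↦ Φ^{-1} Xᵗ Φ satisfies (R_g)^* ⊆ R_g for every g ∈ G. Then n is even and there exist h ∈ G and a permutation σ of {1, …, n} with σ ∘ σ = id and σ(i) ≠ i for all i, such that g_i g_{σ(i)} = h for all i. -/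
/-!
Conjugating the matrix unit `E_ij` by the involution puts `Φ⁻¹_kj Φ_il` at position `(k, l)`, so
preserving the grading forces `g_i g_l` to equal one fixed `h` wherever `Φ_il ≠ 0`. Hence the rows
of `Φ` indexed by the fiber `g = a` are supported on the columns of the fiber `g = h / a`.
Invertibility of `Φ` makes these two fibers equinumerous, and when `a = h / a` the corresponding
diagonal block of `Φ` is invertible and skew-symmetric, so that fiber has even size. Matching the
fibers `a` and `h / a` with each other, and splitting each self-matched fiber into pairs, gives `σ`.
-/

open Matrix Finset

theorem Matrix.even_card_of_isUnit_of_transpose_eq_neg {ι R : Type*} [Fintype ι] [DecidableEq ι]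
    [CommRing R] (h2 : (2 : R) ≠ 0) {A : Matrix ι ι R} (hA : IsUnit A) (hskew : Aᵀ = -A) :
    Even (Fintype.card ι) := by
  by_contra hodd
  have hdet : A.det = -A.det := by
    conv_lhs => rw [← det_transpose, hskew]
    rw [det_neg, (Nat.not_even_iff_odd.1 hodd).neg_one_pow, neg_one_mul]
  have h2det : 2 * A.det = 0 := by linear_combination hdet
  exact h2 (((isUnit_iff_isUnit_det A).1 hA).mul_left_eq_zero.1 h2det)

theorem Matrix.linearIndependent_row_submatrix {m n R : Type*} [Ring R] {A : Matrix m n R}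
    (hA : LinearIndependent R A.row) {p : m → Prop} {q : n → Prop}
    (hpq : ∀ i l, p i → ¬ q l → A i l = 0) :
    LinearIndependent R
      (A.submatrix (Subtype.val : {i // p i} → m) (Subtype.val : {l // q l} → n)).row := by
  rw [linearIndependent_iff']
  intro s c hc i hi
  refine linearIndependent_iff'.1 (hA.comp _ Subtype.val_injective) s c ?_ i hi
  ext l
  by_cases hl : q l
  · simpa using congr_fun hc ⟨l, hl⟩
  · simp [hpq _ _ (Subtype.prop _) hl]

theorem Matrix.card_le_card_of_linearIndependent_row {m n K : Type*} [Field K]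
    {A : Matrix m n K} (hA : LinearIndependent K A.row) {p : m → Prop} {q : n → Prop}
    [Fintype {i // p i}] [Fintype {l // q l}]
    (hpq : ∀ i l, p i → ¬ q l → A i l = 0) :
    Fintype.card {i // p i} ≤ Fintype.card {l // q l} := by
  simpa using (linearIndependent_row_submatrix hA hpq).fintype_card_le_finrank

theorem Finset.exists_partner_of_card_fiber_eq {α β : Type*} [DecidableEq α] [DecidableEq β]
    (g : α → β) {τ : β → β} {s : Finset α}
    (hcard : ∀ b, #{i ∈ s | g i = b} = #{i ∈ s | g i = τ b})
    (heven : ∀ b, τ b = b → Even #{i ∈ s | g i = b}) {i : α} (hi : i ∈ s) :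
    ∃ j ∈ s, j ≠ i ∧ g j = τ (g i) := by
  suffices ({j ∈ s | g j = τ (g i)}.erase i).Nonempty by
    obtain ⟨j, hj⟩ := this
    simp only [mem_erase, mem_filter] at hj
    exact ⟨j, hj.2.1, hj.1, hj.2.2⟩
  -- if `τ` fixes `g i`, the fiber of `g i` contains `i` and has even size, hence a second element
  have hpos : 0 < #{j ∈ s | g j = g i} := card_pos.2 ⟨i, by simp [hi]⟩
  rw [← card_pos]
  by_cases hfix : τ (g i) = g i
  · obtain ⟨m, hm⟩ := heven _ hfix
    rw [hfix, card_erase_of_mem (by simp [hi])]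
    omega
  · rwa [erase_eq_of_notMem (by simp [Ne.symm hfix]), ← hcard]

theorem Finset.exists_involutive_pairing {α β : Type*} [DecidableEq α] [DecidableEq β]
    (g : α → β) {τ : β → β} (hτ : Function.Involutive τ) (s : Finset α)
    (hcard : ∀ b, #{i ∈ s | g i = b} = #{i ∈ s | g i = τ b})
    (heven : ∀ b, τ b = b → Even #{i ∈ s | g i = b}) :
    ∃ f : α → α, ∀ i ∈ s, f i ∈ s ∧ f (f i) = i ∧ f i ≠ i ∧ g (f i) = τ (g i) := by
  induction s using Finset.strongInduction with
  | H s ih =>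
  rcases s.eq_empty_or_nonempty with rfl | ⟨i, hi⟩
  · exact ⟨id, by simp⟩
  obtain ⟨j, hj, hji, hgj⟩ := exists_partner_of_card_fiber_eq g hcard heven hi
  have hj' : j ∈ s.erase i := mem_erase.2 ⟨hji, hj⟩
  set t := (s.erase i).erase j
  have hsplit : ∀ b, #{k ∈ s | g k = b} =
      #{k ∈ t | g k = b} + (if g i = b then 1 else 0) + (if g j = b then 1 else 0) := by
    intro b
    simp only [card_filter]
    rw [← add_sum_erase s _ hi, ← add_sum_erase _ _ hj']
    ring
  have hi_iff : ∀ b, g i = τ b ↔ g j = b := fun b => by rw [hgj, hτ.eq_iff]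
  have hj_iff : ∀ b, g j = τ b ↔ g i = b := fun b => by rw [hgj, hτ.injective.eq_iff]
  obtain ⟨f, hf⟩ := ih t ((erase_subset _ _).trans_ssubset (erase_ssubset hi))
    (fun b => by
      have h₁ := hsplit b; have h₂ := hsplit (τ b); have h₃ := hcard b
      simp only [hi_iff, hj_iff] at h₂
      split_ifs at h₁ h₂ <;> omega)
    (fun b hb => by
      have hij : g i = b ↔ g j = b := by rw [← hj_iff, hb]
      have h₁ := hsplit b
      simp only [← hij] at h₁
      have h₂ := heven b hb
      split_ifs at h₁ <;> simpa [h₁, Nat.even_add] using h₂)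
  have ht : ∀ k ∈ t, k ≠ i ∧ k ≠ j := fun k hk => by
    simp only [t, mem_erase] at hk
    exact ⟨hk.2.1, hk.1⟩
  refine ⟨fun k => if k = i then j else if k = j then i else f k, fun k hk => ?_⟩
  by_cases hki : k = i
  · subst hki
    simp [hji, hj, hgj]
  by_cases hkj : k = j
  · subst hkj
    simp [hji, hji.symm, hi, hgj, hτ (g i)]
  have hkt : k ∈ t := by simp [t, hki, hkj, hk]
  obtain ⟨hfk, hffk, hfkk, hgfk⟩ := hf k hkt
  simp [hki, hkj, (ht _ hfk).1, (ht _ hfk).2, hffk, hfkk, hgfk,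
    mem_of_mem_erase (mem_of_mem_erase hfk)]

def elementaryGrading (F : Type*) [Semiring F] {ι G : Type*} [DecidableEq ι] [Group G]
    (g : ι → G) (a : G) : Submodule F (Matrix ι ι F) :=
  Submodule.span F {x | ∃ i j : ι, (g i)⁻¹ * g j = a ∧ x = Matrix.single i j (1 : F)}

section ElementaryGrading

variable {F ι G : Type*} [DecidableEq ι] {g : ι → G}

theorem apply_eq_zero_of_mem_elementaryGrading [Semiring F] [Group G] {a : G} {x : Matrix ι ι F}
    (hx : x ∈ elementaryGrading F g a) {k l : ι} (hkl : (g k)⁻¹ * g l ≠ a) : x k l = 0 := by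
  induction hx using Submodule.span_induction with
  | mem y hy =>
    obtain ⟨i, j, rfl, rfl⟩ := hy
    exact single_apply_of_ne _ _ _ _ _ fun ⟨hi, hj⟩ => hkl (by rw [hi, hj])
  | zero => rfl
  | add y z _ _ hy hz => simp [hy, hz]
  | smul t y _ hy => simp [hy]

variable [Field F] [Fintype ι] [CommGroup G]

theorem mul_eq_mul_of_transpose_conj_mem {Ψ Φ : Matrix ι ι F}
    (hgr : ∀ a, ∀ x ∈ elementaryGrading F g a, Ψ * xᵀ * Φ ∈ elementaryGrading F g a)
    {i j k l : ι} (hΨ : Ψ k j ≠ 0) (hΦ : Φ i l ≠ 0) : g i * g l = g j * g k := by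
  have hx : single i j (1 : F) ∈ elementaryGrading F g ((g i)⁻¹ * g j) :=
    Submodule.subset_span ⟨i, j, rfl, rfl⟩
  have hentry : (Ψ * (single i j (1 : F))ᵀ * Φ) k l = Ψ k j * Φ i l := by
    simp [mul_apply, single, ite_and]
  have hdeg : (g k)⁻¹ * g l = (g i)⁻¹ * g j := by
    by_contra hne
    exact mul_ne_zero hΨ hΦ (hentry ▸ apply_eq_zero_of_mem_elementaryGrading (hgr _ _ hx) hne)
  rw [inv_mul_eq_iff_eq_mul] at hdeg
  rw [hdeg, mul_left_comm, mul_inv_cancel_left, mul_comm]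

theorem exists_forall_mul_eq_of_transpose_conj_mem {Φ : Matrix ι ι F} (hΦ : IsUnit Φ)
    (hgr : ∀ a, ∀ x ∈ elementaryGrading F g a, Φ⁻¹ * xᵀ * Φ ∈ elementaryGrading F g a) :
    ∃ h, ∀ i l, Φ i l ≠ 0 → g i * g l = h := by
  cases isEmpty_or_nonempty ι
  · exact ⟨1, fun i => isEmptyElim i⟩
  obtain ⟨k, j, hkj⟩ : ∃ k j, Φ⁻¹ k j ≠ 0 := by
    by_contra! hzero
    exact (isUnit_nonsing_inv_iff.2 hΦ).ne_zero (Matrix.ext hzero)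
  exact ⟨g j * g k, fun i l hil => mul_eq_mul_of_transpose_conj_mem hgr hkj hil⟩

end ElementaryGrading

section Fibers

variable {F ι G : Type*} [Field F] [Fintype ι] [DecidableEq ι] [CommGroup G] [DecidableEq G]
  {Φ : Matrix ι ι F} (hΦ : IsUnit Φ) {g : ι → G} {h : G}
  (hsupp : ∀ i l, Φ i l ≠ 0 → g i * g l = h)
include hΦ hsupp

theorem card_fiber_le (a : G) :
    Fintype.card {i // g i = a} ≤ Fintype.card {i // g i = h / a} :=
  card_le_card_of_linearIndependent_row (linearIndependent_rows_iff_isUnit.2 hΦ)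
    fun i l hi hl => by_contra fun hil => hl (eq_div_of_mul_eq'' (hi ▸ hsupp i l hil))

theorem card_fiber_eq (a : G) :
    Fintype.card {i // g i = a} = Fintype.card {i // g i = h / a} :=
  le_antisymm (card_fiber_le hΦ hsupp a) (by simpa using card_fiber_le hΦ hsupp (h / a))

theorem even_card_fiber (h2 : (2 : F) ≠ 0) (hskew : Φᵀ = -Φ) {a : G} (ha : h / a = a) :
    Even (Fintype.card {i // g i = a}) := by
  have hpp : ∀ i l, g i = a → ¬ g l = a → Φ i l = 0 := fun i l hi hl =>
    by_contra fun hil => hl (ha ▸ eq_div_of_mul_eq'' (hi ▸ hsupp i l hil))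
  refine even_card_of_isUnit_of_transpose_eq_neg h2
    (linearIndependent_rows_iff_isUnit.1
      (linearIndependent_row_submatrix (linearIndependent_rows_iff_isUnit.2 hΦ) hpp)) ?_
  rw [transpose_submatrix, hskew]
  rfl

end Fibers

/-- If a symplectic involution `X ↦ Φ⁻¹ Xᵗ Φ` (`Φ` invertible
skew-symmetric, char F ≠ 2, `G` abelian) preserves every component of the elementary
`G`-grading of `M_n(F)` defined by `(g_1, …, g_n)`, then `n` is even and there exist
`h ∈ G` and a fixed-point-free involutive permutation `σ` of `{1, …, n}` with
`g_i g_{σ(i)} = h` for all `i`. -/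
theorem stmt8 (F : Type*) [Field F] (hchar : (2 : F) ≠ 0)
    (G : Type*) [CommGroup G]
    (n : ℕ) (g : Fin n → G)
    (R : G → Submodule F (Matrix (Fin n) (Fin n) F))
    (hR : R = fun a => Submodule.span F
      {x | ∃ i j : Fin n, (g i)⁻¹ * g j = a ∧ x = Matrix.single i j (1 : F)})
    (Φ : Matrix (Fin n) (Fin n) F) (hΦ : IsUnit Φ) (hskew : Φᵀ = -Φ)
    (hgr : ∀ a : G, ∀ x ∈ R a, Φ⁻¹ * xᵀ * Φ ∈ R a) :
    Even n ∧
    ∃ (h : G) (σ : Equiv.Perm (Fin n)),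
      (∀ i, σ (σ i) = i) ∧ (∀ i, σ i ≠ i) ∧ ∀ i, g i * g (σ i) = h := by
  classical
  subst hR
  obtain ⟨h, hsupp⟩ := exists_forall_mul_eq_of_transpose_conj_mem hΦ hgr
  obtain ⟨f, hf⟩ := Finset.exists_involutive_pairing g (div_div_cancel h) univ
    (fun a => by simpa only [Fintype.card_subtype] using card_fiber_eq hΦ hsupp a)
    (fun a ha => by
      simpa only [Fintype.card_subtype] using even_card_fiber hΦ hsupp hchar hskew ha)
  have hf_inv : Function.Involutive f := fun i => (hf i (mem_univ i)).2.1
  refine ⟨by simpa using even_card_of_isUnit_of_transpose_eq_neg hchar hΦ hskew, h,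
    hf_inv.toPerm f, hf_inv, fun i => (hf i (mem_univ i)).2.2.1, fun i => ?_⟩
  rw [Function.Involutive.coe_toPerm, (hf i (mem_univ i)).2.2.2, mul_div_cancel]
end

section
/- Let F be a field of characteristic different from 2 and r ≥ 1. For each t = (t_1, …, t_r) ∈ (Z_2 × Z_2)^r, let X_t ∈ M_{2^r}(F) be the Kronecker product X_{t_1} ⊗ ⋯ ⊗ X_{t_r}, where X_{(0,0)} = I, X_{(1,0)} = diag(−1,1), X_{(0,1)} = [[0,1],[1,0]], X_{(1,1)} = [[0,−1],[1,0]]. These 4^r matrices span the one-dimensional components of a fine (Z_2 × Z_2)^r-grading of M_{2^r}(F). If Q ∈ M_{2^r}(F) is invertible and the map X ↦ Q^{-1} Xᵗ Q maps span(X_t) into itself for every t, then Q is a nonzero scalar multiple of X_s for some s ∈ (Z_2 × Z_2)^r; in particular Qᵗ = Q or Qᵗ = −Q, i.e., (Qᵗ)^{-1} Q = ±I. -/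
/-!
Write `ω(t, u) = ∑ₛ (tₛ)₂ (uₛ)₁ ∈ ZMod 2`. Then `X_t X_u = (-1)^ω(t,u) X_{t+u}`, so
`X_t X_u = (-1)^(ω(t,u) + ω(u,t)) X_u X_t` and `X_tᵀ = (-1)^ω(t,t) X_t`. The `X_t` are
trace-orthogonal with `tr (X_t X_t) = ±2^r ≠ 0`, so they form a basis of `M_{2^r}(F)`, and in this
basis every map `Y ↦ X_tᵀ Y X_t` is diagonal, with eigenvalue `(-1)^(ω(t,u) + ω(u,t))` at `X_u`.
Since the commutator form `ω(t,u) + ω(u,t)` is nondegenerate, these eigenvalues separate the basis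
vectors. The hypothesis `Q⁻¹ X_tᵀ Q = a X_t` gives `X_tᵀ Q X_t = ±a Q`, so `Q` is a common
eigenvector of all these maps and hence a multiple of a single `X_s`. Transposing then gives
`Qᵀ = ±Q`.
-/

open Matrix

/-- The four Pauli-grading matrices of `M_2(F)`:
`X_{(0,0)} = I`, `X_{(1,0)} = diag(−1,1)`, `X_{(0,1)} = [[0,1],[1,0]]`,
`X_{(1,1)} = [[0,−1],[1,0]]`. -/
noncomputable def pauliMat (F : Type*) [Field F] (t : ZMod 2 × ZMod 2) :
    Matrix (Fin 2) (Fin 2) F :=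
  (!![-1, 0; 0, 1] : Matrix (Fin 2) (Fin 2) F) ^ (t.1.val) *
    (!![0, 1; 1, 0] : Matrix (Fin 2) (Fin 2) F) ^ (t.2.val)

/-- The `r`-fold Kronecker product `X_t = X_{t_1} ⊗ ⋯ ⊗ X_{t_r}` of Pauli matrices,
realized as a matrix indexed by `Fin r → Fin 2` (identifying `M_{2^r}(F)` with
matrices over `(Fin 2)^r`), with entries
`(X_t)_{i j} = ∏_s (X_{t_s})_{i_s j_s}`. -/
noncomputable def pauliKron (F : Type*) [Field F] (r : ℕ)
    (t : Fin r → ZMod 2 × ZMod 2) :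
    Matrix (Fin r → Fin 2) (Fin r → Fin 2) F :=
  Matrix.of fun i j => ∏ s : Fin r, pauliMat F (t s) (i s) (j s)

namespace Matrix

section piKron

variable {ι m n p R : Type*} [Fintype ι] [CommSemiring R]

def piKron (A : ι → Matrix m n R) : Matrix (ι → m) (ι → n) R :=
  of fun i j => ∏ s, A s (i s) (j s)

theorem piKron_mul [DecidableEq ι] [Fintype p] (A : ι → Matrix m p R) (B : ι → Matrix p n R) :
    piKron A * piKron B = piKron fun s => A s * B s := by
  ext i j
  simp only [piKron, mul_apply, of_apply, Fintype.prod_sum, ← Finset.prod_mul_distrib]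

theorem piKron_smul (c : ι → R) (A : ι → Matrix m n R) :
    (piKron fun s => c s • A s) = (∏ s, c s) • piKron A := by
  ext i j
  simp [piKron, Finset.prod_mul_distrib]

theorem transpose_piKron (A : ι → Matrix m n R) :
    (piKron A)ᵀ = piKron fun s => (A s)ᵀ :=
  rfl

theorem piKron_one [DecidableEq m] : piKron (fun _ : ι => (1 : Matrix m m R)) = 1 := by
  ext i j
  simp [piKron, one_apply, Finset.prod_boole, funext_iff]

theorem trace_piKron [DecidableEq ι] [Fintype m] (A : ι → Matrix m m R) :
    trace (piKron A) = ∏ s, trace (A s) := by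
  simp only [trace, diag, piKron, of_apply, Fintype.prod_sum]

end piKron

section Invertible

variable {K n : Type*} [Field K] [Fintype n] [DecidableEq n]

theorem exists_transpose_mul_mul_eq_smul {Q X : Matrix n n K} (hQ : IsUnit Q) {e : K}
    (hX : X * X = e • 1) (h : Q⁻¹ * Xᵀ * Q ∈ Submodule.span K {X}) :
    ∃ d : K, Xᵀ * Q * X = d • Q := by
  obtain ⟨a, ha⟩ := Submodule.mem_span_singleton.mp h
  have hdet : IsUnit Q.det := (isUnit_iff_isUnit_det Q).mp hQ
  refine ⟨a * e, ?_⟩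
  calc Xᵀ * Q * X = Q * (Q⁻¹ * Xᵀ * Q) * X := by
        rw [Matrix.mul_assoc Q⁻¹, mul_nonsing_inv_cancel_left _ _ hdet]
    _ = (a * e) • Q := by
        rw [← ha, Matrix.mul_smul, Matrix.smul_mul, Matrix.mul_assoc, hX, Matrix.mul_smul,
          Matrix.mul_one, smul_smul]

theorem inv_transpose_mul_eq_one_or_neg_one {Q : Matrix n n K} (hQ : IsUnit Q)
    (h : Qᵀ = Q ∨ Qᵀ = -Q) : (Qᵀ)⁻¹ * Q = 1 ∨ (Qᵀ)⁻¹ * Q = -1 := by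
  have hdet : IsUnit Q.det := (isUnit_iff_isUnit_det Q).mp hQ
  rcases h with h | h <;> rw [h]
  · exact Or.inl (nonsing_inv_mul Q hdet)
  · rw [inv_eq_left_inv (B := -Q⁻¹) (by rw [neg_mul_neg, nonsing_inv_mul Q hdet]),
      Matrix.neg_mul, nonsing_inv_mul Q hdet]
    exact Or.inr rfl

end Invertible

end Matrix

theorem AddChar.map_sum_eq_prod {ι A M : Type*} [AddCommMonoid A] [CommMonoid M]
    (ψ : AddChar A M) (s : Finset ι) (f : ι → A) : ψ (∑ i ∈ s, f i) = ∏ i ∈ s, ψ (f i) := by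
  induction s using Finset.cons_induction with
  | empty => simp
  | cons a s ha ih => rw [Finset.sum_cons, Finset.prod_cons, AddChar.map_add_eq_mul, ih]

namespace Module.Basis

variable {ι κ : Type*}

theorem repr_apply_of_apply_eq_smul {R M : Type*} [CommSemiring R] [AddCommMonoid M]
    [Module R M] (b : Basis ι R M) {f : M →ₗ[R] M} {χ : ι → R} (hf : ∀ i, f (b i) = χ i • b i)
    (x : M) (i : ι) : b.repr (f x) i = χ i * b.repr x i := by
  have : Finsupp.lapply i ∘ₗ b.repr.toLinearMap ∘ₗ f =
      χ i • (Finsupp.lapply i ∘ₗ b.repr.toLinearMap) := b.ext fun j => by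
    by_cases hij : i = j
    · subst hij; simp [hf]
    · simp [hf, hij]
  exact LinearMap.congr_fun this x

theorem exists_eq_smul_of_common_eigenvector {K V : Type*} [Field K] [AddCommGroup V]
    [Module K V] (b : Basis ι K V) {T : κ → V →ₗ[K] V} {χ : κ → ι → K}
    (hT : ∀ t i, T t (b i) = χ t i • b i) (hχ : Function.Injective fun i t => χ t i)
    {x : V} (hx : ∀ t, ∃ d : K, T t x = d • x) (hx0 : x ≠ 0) :
    ∃ i, ∃ c : K, c ≠ 0 ∧ x = c • b i := by
  choose d hd using hx
  have hsupp : ∀ i, b.repr x i ≠ 0 → (fun t => χ t i) = d := fun i hi => funext fun t =>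
    mul_right_cancel₀ hi <| by
      rw [← b.repr_apply_of_apply_eq_smul (hT t), hd t, map_smul, Finsupp.smul_apply, smul_eq_mul]
  obtain ⟨i, hi⟩ : ∃ i, b.repr x i ≠ 0 := by
    by_contra! h
    exact hx0 (b.repr.map_eq_zero_iff.mp (Finsupp.ext h))
  refine ⟨i, b.repr x i, hi, b.ext_elem fun j => ?_⟩
  by_cases hji : j = i
  · subst hji; simp
  · have hj : b.repr x j = 0 := by
      by_contra hj
      exact hji (hχ ((hsupp j hj).trans (hsupp i hi).symm))
    simp [hj, Ne.symm hji]

end Module.Basis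

theorem ZMod.forall_two {P : ZMod 2 → Prop} : (∀ a, P a) ↔ P 0 ∧ P 1 :=
  Fin.forall_fin_two

noncomputable def signChar (R : Type*) [CommRing R] : AddChar (ZMod 2) R :=
  AddChar.zmodChar 2 (neg_one_sq (R := R))

section signChar

variable (R : Type*) [CommRing R]

@[simp]
theorem signChar_one : signChar R 1 = -1 := by
  simp [signChar, AddChar.zmodChar_apply, ZMod.val_one]

theorem signChar_mul_self (a : ZMod 2) : signChar R a * signChar R a = 1 := by
  rw [← AddChar.map_add_eq_mul, CharTwo.add_self_eq_zero, AddChar.map_zero_eq_one]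

theorem signChar_injective (h2 : (2 : R) ≠ 0) : Function.Injective (signChar R) := by
  have h : (1 : R) ≠ -1 := fun h => h2 (by linear_combination h)
  intro a b
  revert a b
  simp [ZMod.forall_two, h, h.symm]

end signChar

section pauliMat

variable (F : Type*) [Field F]

theorem pauliMat_zero : pauliMat F 0 = 1 := by simp [pauliMat]

theorem pauliMat_mul (a b : ZMod 2 × ZMod 2) :
    pauliMat F a * pauliMat F b = signChar F (a.2 * b.1) • pauliMat F (a + b) := by
  revert a b
  simp only [Prod.forall, ZMod.forall_two]
  simp [pauliMat, ZMod.val_one, CharTwo.add_self_eq_zero, one_fin_two]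

theorem transpose_pauliMat (a : ZMod 2 × ZMod 2) :
    (pauliMat F a)ᵀ = signChar F (a.2 * a.1) • pauliMat F a := by
  ext i j
  revert a i j
  simp only [Prod.forall, ZMod.forall_two, Fin.forall_fin_two]
  simp [pauliMat, ZMod.val_one]

theorem trace_pauliMat_of_ne_zero {a : ZMod 2 × ZMod 2} (ha : a ≠ 0) :
    trace (pauliMat F a) = 0 := by
  revert a
  simp only [Prod.forall, ZMod.forall_two]
  simp [pauliMat, ZMod.val_one, trace_fin_two]

end pauliMat

section pauliForm

variable {r : ℕ}

def pauliForm (t u : Fin r → ZMod 2 × ZMod 2) : ZMod 2 :=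
  ∑ s, (t s).2 * (u s).1

theorem pauliForm_single_left (s : Fin r) (g : ZMod 2 × ZMod 2) (u : Fin r → ZMod 2 × ZMod 2) :
    pauliForm (Pi.single s g) u = g.2 * (u s).1 := by
  simp [pauliForm, Pi.single_apply, apply_ite]

theorem pauliForm_single_right (s : Fin r) (g : ZMod 2 × ZMod 2) (u : Fin r → ZMod 2 × ZMod 2) :
    pauliForm u (Pi.single s g) = (u s).2 * g.1 := by
  simp [pauliForm, Pi.single_apply, apply_ite]

theorem eq_of_forall_pauliForm_add_eq {u u' : Fin r → ZMod 2 × ZMod 2}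
    (h : ∀ t, pauliForm t u + pauliForm u t = pauliForm t u' + pauliForm u' t) : u = u' := by
  funext s
  have h10 := h (Pi.single s (1, 0))
  have h01 := h (Pi.single s (0, 1))
  simp [pauliForm_single_left, pauliForm_single_right] at h10 h01
  exact Prod.ext h01 h10

end pauliForm

section pauliKron

variable (F : Type*) [Field F] {r : ℕ}

theorem pauliKron_eq_piKron (t : Fin r → ZMod 2 × ZMod 2) :
    pauliKron F r t = piKron fun s => pauliMat F (t s) :=
  rfl

theorem pauliKron_zero : pauliKron F r 0 = 1 := by
  simp [pauliKron_eq_piKron, pauliMat_zero, piKron_one]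

theorem pauliKron_mul (t u : Fin r → ZMod 2 × ZMod 2) :
    pauliKron F r t * pauliKron F r u =
      signChar F (pauliForm t u) • pauliKron F r (t + u) := by
  simp only [pauliKron_eq_piKron, piKron_mul, pauliMat_mul, piKron_smul, pauliForm,
    AddChar.map_sum_eq_prod, Pi.add_apply]

theorem transpose_pauliKron (t : Fin r → ZMod 2 × ZMod 2) :
    (pauliKron F r t)ᵀ = signChar F (pauliForm t t) • pauliKron F r t := by
  simp only [pauliKron_eq_piKron, transpose_piKron, transpose_pauliMat, piKron_smul, pauliForm,
    AddChar.map_sum_eq_prod]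

theorem pauliKron_mul_self (t : Fin r → ZMod 2 × ZMod 2) :
    pauliKron F r t * pauliKron F r t = signChar F (pauliForm t t) • 1 := by
  rw [pauliKron_mul, show t + t = 0 from funext fun s => CharTwo.add_self_eq_zero (t s),
    pauliKron_zero]

theorem pauliKron_mul_comm (t u : Fin r → ZMod 2 × ZMod 2) :
    pauliKron F r t * pauliKron F r u =
      signChar F (pauliForm t u + pauliForm u t) • (pauliKron F r u * pauliKron F r t) := by
  rw [pauliKron_mul, pauliKron_mul, smul_smul, ← AddChar.map_add_eq_mul, add_assoc,
    CharTwo.add_self_eq_zero, add_zero, add_comm u]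

theorem transpose_pauliKron_mul_mul (t u : Fin r → ZMod 2 × ZMod 2) :
    (pauliKron F r t)ᵀ * pauliKron F r u * pauliKron F r t =
      signChar F (pauliForm t u + pauliForm u t) • pauliKron F r u := by
  rw [transpose_pauliKron, Matrix.smul_mul, pauliKron_mul_comm F t u, Matrix.smul_mul,
    Matrix.smul_mul, Matrix.mul_assoc, pauliKron_mul_self, Matrix.mul_smul, Matrix.mul_one,
    smul_smul, smul_smul]
  congr 1
  linear_combination signChar F (pauliForm t u + pauliForm u t) *
    signChar_mul_self F (pauliForm t t)

theorem trace_pauliKron_of_ne_zero {t : Fin r → ZMod 2 × ZMod 2} (ht : t ≠ 0) :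
    trace (pauliKron F r t) = 0 := by
  obtain ⟨s, hs⟩ := Function.ne_iff.mp ht
  rw [pauliKron_eq_piKron, trace_piKron]
  exact Finset.prod_eq_zero (Finset.mem_univ s) (trace_pauliMat_of_ne_zero F hs)

theorem linearIndependent_pauliKron (h2 : (2 : F) ≠ 0) :
    LinearIndependent F (pauliKron F r) := by
  let B : LinearMap.BilinForm F (Matrix (Fin r → Fin 2) (Fin r → Fin 2) F) :=
    (LinearMap.mul F _).compr₂ (traceLinearMap _ F F)
  refine LinearMap.BilinForm.linearIndependent_of_iIsOrtho (B := B) (fun t u htu => ?_)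
    fun t => ?_
  · have htu' : t + u ≠ 0 := fun h =>
      htu ((add_eq_zero_iff_eq_neg.mp h).trans (funext fun s => CharTwo.neg_eq (u s)))
    change trace (pauliKron F r t * pauliKron F r u) = 0
    rw [pauliKron_mul, trace_smul, trace_pauliKron_of_ne_zero F htu', smul_zero]
  · change trace (pauliKron F r t * pauliKron F r t) ≠ 0
    rw [pauliKron_mul_self, trace_smul, trace_one, smul_eq_mul]
    exact mul_ne_zero (left_ne_zero_of_mul_eq_one (signChar_mul_self F _)) (by simp [h2])

variable (r)

noncomputable def pauliBasis (h2 : (2 : F) ≠ 0) :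
    Module.Basis (Fin r → ZMod 2 × ZMod 2) F (Matrix (Fin r → Fin 2) (Fin r → Fin 2) F) :=
  basisOfLinearIndependentOfCardEqFinrank (linearIndependent_pauliKron F h2) (by
    simp [Module.finrank_matrix, ← mul_pow])

theorem coe_pauliBasis (h2 : (2 : F) ≠ 0) : ⇑(pauliBasis F r h2) = pauliKron F r :=
  coe_basisOfLinearIndependentOfCardEqFinrank _ _

end pauliKron

theorem stmt16_general (F : Type*) [Field F] (hchar : (2 : F) ≠ 0)
    (r : ℕ)
    (Q : Matrix (Fin r → Fin 2) (Fin r → Fin 2) F) (hQ : IsUnit Q)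
    (hgr : ∀ t : Fin r → ZMod 2 × ZMod 2,
      ∀ x ∈ Submodule.span F {pauliKron F r t},
        Q⁻¹ * xᵀ * Q ∈ Submodule.span F {pauliKron F r t}) :
    (∃ (s : Fin r → ZMod 2 × ZMod 2) (c : F), c ≠ 0 ∧ Q = c • pauliKron F r s) ∧
    (Qᵀ = Q ∨ Qᵀ = -Q) ∧ ((Qᵀ)⁻¹ * Q = 1 ∨ (Qᵀ)⁻¹ * Q = -1) := by
  let T (t : Fin r → ZMod 2 × ZMod 2) :
      Module.End F (Matrix (Fin r → Fin 2) (Fin r → Fin 2) F) :=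
    LinearMap.mulRight F (pauliKron F r t) ∘ₗ LinearMap.mulLeft F (pauliKron F r t)ᵀ
  obtain ⟨s, c, hc, hQs⟩ := (pauliBasis F r hchar).exists_eq_smul_of_common_eigenvector
    (T := T) (χ := fun t u => signChar F (pauliForm t u + pauliForm u t))
    (fun t u => by simpa [T, coe_pauliBasis] using transpose_pauliKron_mul_mul F t u)
    (fun u u' h => eq_of_forall_pauliForm_add_eq fun t =>
      signChar_injective F hchar (congrFun h t))
    (fun t => exists_transpose_mul_mul_eq_smul hQ (pauliKron_mul_self F t)
      (hgr t _ (Submodule.mem_span_singleton_self _)))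
    hQ.ne_zero
  rw [coe_pauliBasis] at hQs
  have hQT : Qᵀ = Q ∨ Qᵀ = -Q := by
    rcases mul_self_eq_one_iff.mp (signChar_mul_self F (pauliForm s s)) with h | h <;>
      simp [hQs, transpose_pauliKron, h]
  exact ⟨⟨s, c, hc, hQs⟩, hQT, inv_transpose_mul_eq_one_or_neg_one hQ hQT⟩

/-- If `Q ∈ M_{2^r}(F)` is invertible (char F ≠ 2, r ≥ 1) and
`X ↦ Q⁻¹ Xᵗ Q` maps each one-dimensional component `span(X_t)` of the fine
`(Z_2 × Z_2)^r`-grading of `M_{2^r}(F)` into itself, then `Q` is a nonzero scalar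
multiple of some `X_s`; in particular `Qᵗ = Q` or `Qᵗ = −Q`, i.e. `(Qᵗ)⁻¹ Q = ±I`. -/
theorem stmt16 (F : Type*) [Field F] (hchar : (2 : F) ≠ 0)
    (r : ℕ) (hr : 1 ≤ r)
    (Q : Matrix (Fin r → Fin 2) (Fin r → Fin 2) F) (hQ : IsUnit Q)
    (hgr : ∀ t : Fin r → ZMod 2 × ZMod 2,
      ∀ x ∈ Submodule.span F {pauliKron F r t},
        Q⁻¹ * xᵀ * Q ∈ Submodule.span F {pauliKron F r t}) :
    (∃ (s : Fin r → ZMod 2 × ZMod 2) (c : F), c ≠ 0 ∧ Q = c • pauliKron F r s) ∧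
    (Qᵀ = Q ∨ Qᵀ = -Q) ∧ ((Qᵀ)⁻¹ * Q = 1 ∨ (Qᵀ)⁻¹ * Q = -1) :=
  stmt16_general F hchar r Q hQ hgr
end

section
/- Let F be a field, G a group, n ≥ 1, and suppose R = M_n(F) = ⊕_{g∈G} R_g is a G-grading (R_g R_h ⊆ R_{gh}) which is fine, i.e., dim R_g ≤ 1 for all g ∈ G. Then every nonzero homogeneous element of R is invertible, and the support Supp R = {g ∈ G : R_g ≠ 0} is a subgroup of G; moreover, if x ∈ R_g is nonzero then x^{-1} ∈ R_{g^{-1}}. -/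
/-!
The identity component contains `1`: right multiplication by the degree-`1` component of `1`
fixes every homogeneous element, hence every element. For a nonzero `x ∈ R a`, simplicity of
`M_n(F)` puts `1` in the two-sided ideal generated by `x`, which is spanned by the homogeneous
products `r * x * s`; projecting `1` onto degree `1` yields such a product that is a nonzero
element of `R 1`, which by fineness is `F ∙ 1`: a nonzero scalar. So `x` has a one-sided
inverse, homogeneous of degree `a⁻¹`, which is two-sided because `M_n(F)` is Dedekind-finite.
Products and inverses of nonzero homogeneous elements are then nonzero, so the support is a
subgroup.
-/

open DirectSum Submodule

open scoped Pointwise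

theorem Submodule.eq_span_singleton_of_finrank_le_one {K V : Type*} [DivisionRing K]
    [AddCommGroup V] [Module K V] {N : Submodule K V} [FiniteDimensional K N]
    (hN : Module.finrank K N ≤ 1) {v : V} (hv : v ∈ N) (hv0 : v ≠ 0) : N = K ∙ v :=
  (eq_of_le_of_finrank_le (span_singleton_le_iff_mem v N |>.mpr hv)
    (hN.trans (finrank_span_singleton hv0).ge)).symm

theorem TwoSidedIdeal.mem_span_mul_mul_of_mem_span_singleton {F A : Type*} [CommRing F]
    [Ring A] [Algebra F A] {H : Set A} (hH : Submodule.span F H = ⊤) {x y : A}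
    (hy : y ∈ TwoSidedIdeal.span {x}) : y ∈ Submodule.span F (H * {x} * H) := by
  rw [mem_span_iff_mem_addSubgroup_closure] at hy
  have hsub : Set.univ * {x} * Set.univ ⊆
      ((Submodule.span F (H * {x} * H)).toAddSubgroup : Set A) := by
    rintro _ ⟨_, ⟨r, -, _, rfl, rfl⟩, s, -, rfl⟩
    rw [Submodule.coe_toAddSubgroup, SetLike.mem_coe, ← span_mul_span, ← span_mul_span, hH]
    exact mul_mem_mul (mul_mem_mul Submodule.mem_top (mem_span_singleton_self _))
      Submodule.mem_top
  exact AddSubgroup.closure_le _ |>.mpr hsub hy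

namespace DirectSum

theorem exists_mem_ne_zero_of_mem_span {F M ι : Type*} [Semiring F] [AddCommMonoid M]
    [Module F M] [DecidableEq ι] (R : ι → Submodule F M) [Decomposition R] {T : Set M}
    (hT : ∀ t ∈ T, ∃ i, t ∈ R i) {y : M} (hy : y ∈ span F T) {d : ι} (hyd : y ∈ R d)
    (hy0 : y ≠ 0) : ∃ t ∈ T, t ∈ R d ∧ t ≠ 0 := by
  by_contra! hT0
  have hvanish : ∀ z ∈ span F T, (decompose R z d : M) = 0 := by
    intro z hz
    induction hz using span_induction with
    | mem t ht =>
      obtain ⟨i, hti⟩ := hT t ht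
      obtain rfl | hid := eq_or_ne i d
      · simp [hT0 t ht hti]
      · exact decompose_of_mem_ne R hti hid
    | zero => simp
    | add y z _ _ hy hz => simp [hy, hz]
    | smul c y _ hy =>
      rw [decompose_smul, DirectSum.smul_apply, Submodule.coe_smul, hy, smul_zero]
  exact hy0 (decompose_of_mem_same R hyd ▸ hvanish y hy)

section Algebra

variable {F A G : Type*} [CommSemiring F] [Semiring A] [Algebra F A] [Group G] [DecidableEq G]
  (R : G → Submodule F A) [Decomposition R] (hmul : ∀ a b : G, R a * R b ≤ R (a * b))
include hmul

theorem coe_decompose_mul_of_left_mem_of_mul_le {b : G} {z : A} (hz : z ∈ R b) (y : A) :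
    (decompose R (z * y) b : A) = z * decompose R y 1 := by
  induction y using Decomposition.inductionOn R with
  | zero => simp
  | add y y' hy hy' => simp [mul_add, hy, hy']
  | @homogeneous g y =>
    have hzy := hmul _ _ (mul_mem_mul hz y.2)
    obtain rfl | hg := eq_or_ne g 1
    · rw [decompose_of_mem_same R y.2, decompose_of_mem_same R (by simpa using hzy)]
    · rw [decompose_of_mem_ne R y.2 hg, mul_zero, decompose_of_mem_ne R hzy (by simpa using hg)]

theorem one_mem_of_mul_le : (1 : A) ∈ R 1 := by
  set u : A := ↑(decompose R (1 : A) 1)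
  have hu : ∀ z : A, z * u = z := by
    intro z
    induction z using Decomposition.inductionOn R with
    | zero => simp
    | add z z' hz hz' => rw [add_mul, hz, hz']
    | @homogeneous b z =>
      rw [← coe_decompose_mul_of_left_mem_of_mul_le R hmul z.2, mul_one,
        decompose_of_mem_same R z.2]
  have : u = 1 := by simpa using hu 1
  exact this ▸ SetLike.coe_mem _

end Algebra

section SimpleRing

variable {F A G : Type*} [CommRing F] [Ring A] [Algebra F A] [IsSimpleRing A] [Group G]
  [DecidableEq G] (R : G → Submodule F A) [Decomposition R]
  (hmul : ∀ a b : G, R a * R b ≤ R (a * b))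
include hmul

theorem exists_mul_mul_mem_one_ne_zero {a : G} {x : A} (hx : x ∈ R a) (hx0 : x ≠ 0) :
    ∃ g h : G, ∃ r s : A,
      r ∈ R g ∧ s ∈ R h ∧ r * x * s ∈ R 1 ∧ r * x * s ≠ 0 := by
  have hH : span F (⋃ g, (R g : Set A)) = ⊤ := by
    rw [← iSup_eq_span]; exact (Decomposition.isInternal R).submodule_iSup_eq_top
  have hx1 : (1 : A) ∈ TwoSidedIdeal.span {x} := by
    obtain h | h := eq_bot_or_eq_top (TwoSidedIdeal.span {x})
    · exact absurd ((TwoSidedIdeal.mem_bot A).mp (h ▸ TwoSidedIdeal.subset_span rfl)) hx0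
    · exact h ▸ TwoSidedIdeal.mem_top A
  have hhom : ∀ t ∈ (⋃ g, (R g : Set A)) * {x} * ⋃ g, (R g : Set A), ∃ i, t ∈ R i := by
    rintro _ ⟨_, ⟨r, hr, _, rfl, rfl⟩, s, hs, rfl⟩
    obtain ⟨g, hr⟩ := Set.mem_iUnion.mp hr
    obtain ⟨h, hs⟩ := Set.mem_iUnion.mp hs
    exact ⟨g * a * h, hmul _ _ (mul_mem_mul (hmul _ _ (mul_mem_mul hr hx)) hs)⟩
  obtain ⟨_, ⟨_, ⟨r, hr, _, rfl, rfl⟩, s, hs, rfl⟩, ht1, ht0⟩ :=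
    exists_mem_ne_zero_of_mem_span R hhom
      (TwoSidedIdeal.mem_span_mul_mul_of_mem_span_singleton hH hx1)
      (one_mem_of_mul_le R hmul) one_ne_zero
  obtain ⟨g, hr⟩ := Set.mem_iUnion.mp hr
  obtain ⟨h, hs⟩ := Set.mem_iUnion.mp hs
  exact ⟨g, h, r, s, hr, hs, ht1, ht0⟩

end SimpleRing

section FineIdentityComponent

variable {F A G : Type*} [Field F] [Ring A] [Algebra F A] [IsSimpleRing A]
  [IsDedekindFiniteMonoid A] [Group G] [DecidableEq G] (R : G → Submodule F A) [Decomposition R]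
  (hmul : ∀ a b : G, R a * R b ≤ R (a * b)) (hR1 : R 1 ≤ F ∙ (1 : A))
include hmul hR1

theorem exists_mul_eq_one_of_mem {a : G} {x : A} (hx : x ∈ R a) (hx0 : x ≠ 0) :
    ∃ y ∈ R a⁻¹, x * y = 1 ∧ y * x = 1 := by
  obtain ⟨g, h, r, s, hr, hs, h1, h0⟩ := exists_mul_mul_mem_one_ne_zero R hmul hx hx0
  have hdeg : g * a * h = 1 :=
    degree_eq_of_mem_mem R (hmul _ _ (mul_mem_mul (hmul _ _ (mul_mem_mul hr hx)) hs)) h1 h0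
  obtain ⟨c, hc⟩ := mem_span_singleton.mp (hR1 h1)
  have hc0 : c ≠ 0 := by
    rintro rfl
    exact h0 (by rw [← hc, zero_smul])
  have hyx : (c⁻¹ • r) * (x * s) = 1 := by
    rw [smul_mul_assoc, ← mul_assoc, ← hc, smul_smul, inv_mul_cancel₀ hc0, one_smul]
  have hxy : x * (s * c⁻¹ • r) = 1 := by
    rw [← mul_assoc]; exact mul_eq_one_comm.mp hyx
  have hhg : h * g = a⁻¹ := by
    rw [eq_inv_of_mul_eq_one_right hdeg]; group
  refine ⟨s * c⁻¹ • r, ?_, hxy, mul_eq_one_comm.mp hxy⟩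
  rw [← hhg, mul_smul_comm]
  exact smul_mem _ _ (hmul _ _ (mul_mem_mul hs hr))

def supportSubgroup : Subgroup G where
  carrier := {a | R a ≠ ⊥}
  one_mem' := (Submodule.ne_bot_iff _).mpr ⟨1, one_mem_of_mul_le R hmul, one_ne_zero⟩
  mul_mem' := by
    rintro a b ha hb
    obtain ⟨x, hx, hx0⟩ := (Submodule.ne_bot_iff _).mp ha
    obtain ⟨y, hy, hy0⟩ := (Submodule.ne_bot_iff _).mp hb
    obtain ⟨x', -, hxx', -⟩ := exists_mul_eq_one_of_mem R hmul hR1 hx hx0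
    obtain ⟨y', -, hyy', -⟩ := exists_mul_eq_one_of_mem R hmul hR1 hy hy0
    refine (Submodule.ne_bot_iff _).mpr ⟨x * y, hmul _ _ (mul_mem_mul hx hy), ?_⟩
    exact ((IsUnit.of_mul_eq_one x' hxx').mul (IsUnit.of_mul_eq_one y' hyy')).ne_zero
  inv_mem' := by
    rintro a ha
    obtain ⟨x, hx, hx0⟩ := (Submodule.ne_bot_iff _).mp ha
    obtain ⟨y, hy, hxy, -⟩ := exists_mul_eq_one_of_mem R hmul hR1 hx hx0
    refine (Submodule.ne_bot_iff _).mpr ⟨y, hy, ?_⟩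
    rintro rfl
    exact one_ne_zero (hxy.symm.trans (mul_zero x))

end FineIdentityComponent

end DirectSum

/-- In a fine `G`-grading `M_n(F) = ⊕_g R_g` (each `dim R_g ≤ 1`,
`n ≥ 1`), every nonzero homogeneous element is invertible with `x⁻¹ ∈ R_{g⁻¹}` for
`x ∈ R_g`, and the support `{g : R_g ≠ 0}` is a subgroup of `G`. -/
theorem stmt17 (F : Type*) [Field F] (G : Type*) [Group G] [DecidableEq G]
    (n : ℕ) (hn : 1 ≤ n)
    (R : G → Submodule F (Matrix (Fin n) (Fin n) F))
    (hinternal : DirectSum.IsInternal R)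
    (hmul : ∀ a b : G, R a * R b ≤ R (a * b))
    (hfine : ∀ a : G, Module.finrank F (R a) ≤ 1) :
    (∀ a : G, ∀ x ∈ R a, x ≠ 0 → IsUnit x ∧ x⁻¹ ∈ R a⁻¹) ∧
    ∃ H : Subgroup G, ∀ a : G, a ∈ H ↔ R a ≠ ⊥ := by
  have : Nonempty (Fin n) := ⟨⟨0, hn⟩⟩
  let _ := hinternal.chooseDecomposition
  have hR1 : R 1 = F ∙ 1 :=
    eq_span_singleton_of_finrank_le_one (hfine 1) (one_mem_of_mul_le R hmul) one_ne_zero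
  refine ⟨fun a x hx hx0 => ?_, supportSubgroup R hmul hR1.le, fun _ => Iff.rfl⟩
  obtain ⟨y, hy, hxy, -⟩ := exists_mul_eq_one_of_mem R hmul hR1.le hx hx0
  rw [Matrix.inv_eq_right_inv hxy]
  exact ⟨IsUnit.of_mul_eq_one y hxy, hy⟩
end

section
/- Let F be an algebraically closed field of characteristic different from 2, G an abelian group, and suppose R = M_n(F) = ⊕_{g∈G} R_g is a fine G-grading (dim R_g ≤ 1) whose support T = {g : R_g ≠ 0} satisfies t² = e for all t ∈ T. Then there is a basis {X_t : t ∈ T} of R with X_t ∈ R_t for each t, such that X_t X_u = α(t,u) X_{tu} for all t, u ∈ T where every α(t,u) ∈ {1, −1}; in particular X_u² = α(u,u) I and X_u^{-1} = α(u,u) X_u for every u ∈ T. -/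
/-!
Nonzero homogeneous elements are invertible: for `x ≠ 0` in `R_t`, the matrices `z` with
`(a z b)₁ = 0` for all `a, b` form a two-sided ideal of the simple ring `M_n(F)` that misses `1`,
so it is zero and does not contain `x`; expanding `a, b` into homogeneous parts gives homogeneous
`a, b` with `a x b` a nonzero scalar.

The support is finite and consists of involutions, and `X` is built on a growing subgroup `H` by
adjoining support elements one at a time. If `X` is already defined on `H` with all structure
constants `±1`, and `t` is in the support, rescale a generator of `R_t` to `y` with `y² = 1`
(using that `F` is algebraically closed). Then `X_u y = β y X_u` with `β² = 1` for each
`u ∈ H`, so putting `X_{tu} = y X_u` keeps all structure constants in `{1, -1}` on `H ∪ tH`.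
-/

open Matrix DirectSum Module

namespace DirectSum

variable {F A G : Type*} [CommRing F] [Ring A] [Algebra F A] [DecidableEq G]
  {R : G → Submodule F A} [Decomposition R]

theorem decompose_mul_of_left_mem [Group G] (hmul : ∀ a b, R a * R b ≤ R (a * b)) {h : G} {y : A}
    (hy : y ∈ R h) (x : A) (g : G) :
    (decompose R (y * x) (h * g) : A) = y * decompose R x g := by
  induction x using Decomposition.inductionOn R with
  | zero => simp
  | @homogeneous i x =>
    have hyx := hmul _ _ (Submodule.mul_mem_mul hy x.2)
    by_cases hig : i = g
    · subst hig
      rw [decompose_of_mem_same R hyx, decompose_of_mem_same R x.2]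
    · rw [decompose_of_mem_ne R hyx (by simpa using hig), decompose_of_mem_ne R x.2 hig, mul_zero]
  | add x x' hx hx' => simp [mul_add, decompose_add, hx, hx']

theorem one_mem_of_mul_le_s19 [Group G] (hmul : ∀ a b, R a * R b ≤ R (a * b)) : (1 : A) ∈ R 1 := by
  have hright : ∀ x : A, x * decompose R 1 1 = x := by
    intro x
    induction x using Decomposition.inductionOn R with
    | zero => simp
    | homogeneous x =>
      rw [← decompose_mul_of_left_mem hmul x.2, mul_one, mul_one, decompose_of_mem_same R x.2]
    | add x x' hx hx' => rw [add_mul, hx, hx']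
  have he : (decompose R 1 1 : A) = 1 := by simpa using hright 1
  exact he ▸ (decompose R 1 1).2

theorem exists_homogeneous_decompose_mul_mul_ne_zero {a x b : A} {i : G}
    (h : (decompose R (a * x * b) i : A) ≠ 0) :
    ∃ g h : G, ∃ a' ∈ R g, ∃ b' ∈ R h, (decompose R (a' * x * b') i : A) ≠ 0 := by
  contrapose! h
  induction a using Decomposition.inductionOn R with
  | zero => simp
  | homogeneous a =>
    induction b using Decomposition.inductionOn R with
    | zero => simp
    | homogeneous b => exact h _ _ _ a.2 _ b.2
    | add b b' hb hb' => simp [mul_add, decompose_add, hb, hb']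
  | add a a' ha ha' => simp [add_mul, decompose_add, ha, ha']

theorem exists_decompose_mul_mul_ne_zero [IsSimpleRing A] {i : G}
    (h1 : (decompose R 1 i : A) ≠ 0) {x : A} (hx0 : x ≠ 0) :
    ∃ a b : A, (decompose R (a * x * b) i : A) ≠ 0 := by
  by_contra! h
  let I : TwoSidedIdeal A := .mk' {z | ∀ a b, (decompose R (a * z * b) i : A) = 0}
    (by simp) (fun hz hz' a b => by simp [mul_add, add_mul, decompose_add, hz a b, hz' a b])
    (fun hz a b => by
      rw [mul_neg, neg_mul, decompose_neg, DFinsupp.neg_apply, Submodule.coe_neg, hz a b,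
        neg_zero])
    (fun {c _} hz a b => by simpa [mul_assoc] using hz (a * c) b)
    (fun {_ c} hz a b => by simpa [mul_assoc] using hz a (c * b))
  have hI : I = ⊥ := (eq_bot_or_eq_top I).resolve_right fun hI => by
    have hone : (1 : A) ∈ I := by simp [hI]
    exact h1 (by simpa [I] using hone 1 1)
  have hxI : x ∈ I := by simpa [I] using h
  exact hx0 (by simpa [hI] using hxI)

end DirectSum

theorem Submodule.eq_span_singleton_of_finrank_le_one_s19 {K V : Type*} [DivisionRing K]
    [AddCommGroup V] [Module K V] {S : Submodule K V} [FiniteDimensional K S]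
    (hS : finrank K S ≤ 1) {x : V} (hx : x ∈ S) (hx0 : x ≠ 0) : S = K ∙ x :=
  (Submodule.eq_of_le_of_finrank_le ((Submodule.span_singleton_le_iff_mem x S).mpr hx)
    (hS.trans_eq (finrank_span_singleton hx0).symm)).symm

section DivisionGrading

variable {F A G : Type*} [Field F] [Ring A] [Algebra F A] [FiniteDimensional F A]
  [Group G] [DecidableEq G] {R : G → Submodule F A} [Decomposition R]

theorem isUnit_of_mem_of_ne_zero [IsSimpleRing A] [IsDedekindFiniteMonoid A]
    (hmul : ∀ a b, R a * R b ≤ R (a * b)) (hfine : finrank F (R 1) ≤ 1)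
    {t : G} {x : A} (hx : x ∈ R t) (hx0 : x ≠ 0) : IsUnit x := by
  have hone := one_mem_of_mul_le_s19 hmul
  obtain ⟨a, b, hab⟩ := exists_decompose_mul_mul_ne_zero
    (by rw [decompose_of_mem_same R hone]; exact one_ne_zero) hx0
  obtain ⟨g, h, a, ha, b, hb, hab⟩ := exists_homogeneous_decompose_mul_mul_ne_zero hab
  have hmem : a * x * b ∈ R (g * t * h) :=
    hmul _ _ (Submodule.mul_mem_mul (hmul _ _ (Submodule.mul_mem_mul ha hx)) hb)
  have hdeg : g * t * h = 1 := by
    by_contra hne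
    exact hab (decompose_of_mem_ne R hmem hne)
  rw [hdeg, Submodule.eq_span_singleton_of_finrank_le_one_s19 hfine hone one_ne_zero,
    Submodule.mem_span_singleton] at hmem
  obtain ⟨c, hc⟩ := hmem
  have hc0 : c ≠ 0 := by
    rintro rfl
    exact hab (by rw [← hc, zero_smul, decompose_zero]; rfl)
  refine IsUnit.of_mul_eq_one (b * c⁻¹ • a) ?_
  rw [← mul_assoc]
  apply mul_eq_one_comm.mp
  rw [smul_mul_assoc, ← mul_assoc, ← hc, smul_smul, inv_mul_cancel₀ hc0, one_smul]

end DivisionGrading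

namespace Subgroup

variable {G : Type*} [CommGroup G]

def adjoinInvolution (H : Subgroup G) {t : G} (ht : t * t = 1) : Subgroup G where
  carrier := {u | u ∈ H ∨ t * u ∈ H}
  one_mem' := Or.inl H.one_mem
  mul_mem' := by
    rintro u v (hu | hu) (hv | hv)
    · exact Or.inl (H.mul_mem hu hv)
    · exact Or.inr (by simpa only [mul_left_comm] using H.mul_mem hu hv)
    · exact Or.inr (by simpa only [mul_assoc] using H.mul_mem hu hv)
    · exact Or.inl (by simpa only [mul_mul_mul_comm, ht, one_mul] using H.mul_mem hu hv)
  inv_mem' := by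
    rintro u (hu | hu)
    · exact Or.inl (H.inv_mem hu)
    · refine Or.inr ?_
      simpa only [mul_inv, inv_eq_of_mul_eq_one_right ht] using H.inv_mem hu

variable {H : Subgroup G} {t : G} (ht : t * t = 1)

theorem mem_adjoinInvolution {u : G} : u ∈ H.adjoinInvolution ht ↔ u ∈ H ∨ t * u ∈ H := Iff.rfl

theorem le_adjoinInvolution : H ≤ H.adjoinInvolution ht := fun _ => Or.inl

theorem mem_adjoinInvolution_self : t ∈ H.adjoinInvolution ht := Or.inr (ht ▸ H.one_mem)

end Subgroup

section SignedFamily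

variable {F A G : Type*} [Field F] [Ring A] [Algebra F A] [CommGroup G]

structure IsSignedFamily (R : G → Submodule F A) (H : Subgroup G) (X : G → A) : Prop where
  map_one : X 1 = 1
  mem : ∀ u ∈ H, X u ∈ R u
  isUnit : ∀ u ∈ H, IsUnit (X u)
  mul : ∀ u ∈ H, ∀ v ∈ H, ∃ c : F, c * c = 1 ∧ X u * X v = c • X (u * v)

variable {R : G → Submodule F A} (hmul : ∀ a b, R a * R b ≤ R (a * b))
include hmul

theorem isSignedFamily_bot [DecidableEq G] [Decomposition R] : IsSignedFamily R ⊥ 1 where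
  map_one := rfl
  mem u hu := by
    rw [Subgroup.mem_bot.mp hu]
    exact one_mem_of_mul_le_s19 hmul
  isUnit _ _ := isUnit_one
  mul _ _ _ _ := ⟨1, one_mul 1, by simp⟩

open Classical in
theorem IsSignedFamily.adjoinInvolution {H : Subgroup G} {X : G → A} (hX : IsSignedFamily R H X)
    {t : G} (ht : t * t = 1) {y : A} (hy : y ∈ R t) (hyy : y * y = 1)
    (hcomm : ∀ u ∈ H, ∃ β : F, β * β = 1 ∧ X u * y = β • (y * X u)) :
    IsSignedFamily R (H.adjoinInvolution ht) (fun u => if u ∈ H then X u else y * X (t * u)) where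
  map_one := by rw [if_pos H.one_mem, hX.map_one]
  mem u hu := by
    by_cases huH : u ∈ H
    · rw [if_pos huH]
      exact hX.mem u huH
    · rw [if_neg huH]
      have htu := ((Subgroup.mem_adjoinInvolution ht).mp hu).resolve_left huH
      simpa only [← mul_assoc, ht, one_mul] using
        hmul _ _ (Submodule.mul_mem_mul hy (hX.mem _ htu))
  isUnit u hu := by
    by_cases huH : u ∈ H
    · rw [if_pos huH]
      exact hX.isUnit u huH
    · rw [if_neg huH]
      have htu := ((Subgroup.mem_adjoinInvolution ht).mp hu).resolve_left huH
      exact IsUnit.mul ⟨⟨y, y, hyy, hyy⟩, rfl⟩ (hX.isUnit _ htu)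
  mul u hu v hv := by
    rw [Subgroup.mem_adjoinInvolution] at hu hv
    by_cases huH : u ∈ H <;> by_cases hvH : v ∈ H
    · simp only [if_pos huH, if_pos hvH, if_pos (H.mul_mem huH hvH)]
      exact hX.mul u huH v hvH
    · have htv := hv.resolve_left hvH
      have huv : u * v ∉ H := fun huv => hvH (by simpa using H.mul_mem (H.inv_mem huH) huv)
      obtain ⟨β, hβ, hβX⟩ := hcomm u huH
      obtain ⟨c, hc, hcX⟩ := hX.mul u huH _ htv
      refine ⟨β * c, by rw [mul_mul_mul_comm, hβ, hc, one_mul], ?_⟩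
      simp only [if_pos huH, if_neg hvH, if_neg huv]
      rw [← mul_assoc, hβX, smul_mul_assoc, mul_assoc, hcX, mul_smul_comm, smul_smul,
        mul_left_comm u t v]
    · have htu := hu.resolve_left huH
      have huv : u * v ∉ H := fun huv => huH (by simpa using H.mul_mem huv (H.inv_mem hvH))
      obtain ⟨c, hc, hcX⟩ := hX.mul _ htu v hvH
      refine ⟨c, hc, ?_⟩
      simp only [if_neg huH, if_pos hvH, if_neg huv]
      rw [mul_assoc, hcX, mul_smul_comm, mul_assoc]
    · have htu := hu.resolve_left huH
      have htv := hv.resolve_left hvH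
      have huv : (t * u) * (t * v) = u * v := by rw [mul_mul_mul_comm, ht, one_mul]
      obtain ⟨β, hβ, hβX⟩ := hcomm _ htu
      obtain ⟨c, hc, hcX⟩ := hX.mul _ htu _ htv
      refine ⟨β * c, by rw [mul_mul_mul_comm, hβ, hc, one_mul], ?_⟩
      simp only [if_neg huH, if_neg hvH, if_pos (huv ▸ H.mul_mem htu htv)]
      rw [mul_assoc, ← mul_assoc (X _), hβX, smul_mul_assoc, mul_smul_comm, ← mul_assoc y,
        ← mul_assoc y, hyy, one_mul, hcX, smul_smul, huv]

end SignedFamily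

section InvolutionGrading

variable {F A G : Type*} [Field F] [Ring A] [Algebra F A] [FiniteDimensional F A]
  [CommGroup G] {R : G → Submodule F A} (hmul : ∀ a b, R a * R b ≤ R (a * b))
include hmul

theorem exists_mul_eq_smul_mul_of_mul_self_eq_one (hfine : ∀ g, finrank F (R g) ≤ 1)
    {a t : G} {x y : A} (hx : x ∈ R a) (hx0 : x ≠ 0) (hy : y ∈ R t) (hyy : y * y = 1) :
    ∃ β : F, β * β = 1 ∧ x * y = β • (y * x) := by
  have hyx0 : y * x ≠ 0 := fun h => hx0 (by rw [← one_mul x, ← hyy, mul_assoc, h, mul_zero])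
  have hxy : x * y ∈ R (t * a) := mul_comm a t ▸ hmul _ _ (Submodule.mul_mem_mul hx hy)
  rw [Submodule.eq_span_singleton_of_finrank_le_one_s19 (hfine _)
    (hmul _ _ (Submodule.mul_mem_mul hy hx)) hyx0, Submodule.mem_span_singleton] at hxy
  obtain ⟨β, hβ⟩ := hxy
  refine ⟨β, smul_left_injective F hx0 ?_, hβ.symm⟩
  calc (β * β) • x = β • (y * (x * y)) := by
        rw [← hβ, mul_smul_comm, ← mul_assoc, hyy, one_mul, smul_smul]
    _ = x * y * y := by rw [← mul_assoc, ← smul_mul_assoc, hβ]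
    _ = (1 : F) • x := by rw [mul_assoc, hyy, mul_one, one_smul]

variable [DecidableEq G] [Decomposition R] [IsSimpleRing A] [IsDedekindFiniteMonoid A]

theorem exists_mem_mul_self_eq_one [IsAlgClosed F] (hfine : finrank F (R 1) ≤ 1) {t : G}
    (ht : t * t = 1) (hRt : R t ≠ ⊥) : ∃ y ∈ R t, y * y = 1 := by
  obtain ⟨w, hw, hw0⟩ := (Submodule.ne_bot_iff _).mp hRt
  have hww : w * w ∈ R 1 := ht ▸ hmul _ _ (Submodule.mul_mem_mul hw hw)
  rw [Submodule.eq_span_singleton_of_finrank_le_one_s19 hfine (one_mem_of_mul_le_s19 hmul) one_ne_zero,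
    Submodule.mem_span_singleton] at hww
  obtain ⟨c, hc⟩ := hww
  have hc0 : c ≠ 0 := by
    rintro rfl
    have hunit := isUnit_of_mem_of_ne_zero hmul hfine hw hw0
    exact (hunit.mul hunit).ne_zero (by rw [← hc, zero_smul])
  obtain ⟨z, hz⟩ := IsAlgClosed.exists_eq_mul_self c⁻¹
  refine ⟨z • w, Submodule.smul_mem _ z hw, ?_⟩
  rw [smul_mul_smul_comm, ← hc, smul_smul, ← hz, inv_mul_cancel₀ hc0, one_smul]

theorem exists_isSignedFamily [IsAlgClosed F] (hfine : ∀ g, finrank F (R g) ≤ 1)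
    (hsupp : ∀ t, R t ≠ ⊥ → t * t = 1) :
    ∃ (H : Subgroup G) (X : G → A), IsSignedFamily R H X ∧ ∀ t, R t ≠ ⊥ → t ∈ H := by
  have hfin : {t | R t ≠ ⊥}.Finite := by
    have := (Decomposition.isInternal R).submodule_iSupIndep.fintypeNeBotOfFiniteDimensional
    exact Set.finite_coe_iff.mp (Finite.of_fintype {t // R t ≠ ⊥})
  refine Set.Finite.induction_on_subset
    (motive := fun s _ => ∃ (H : Subgroup G) (X : G → A), IsSignedFamily R H X ∧ s ⊆ H)
    _ hfin ⟨⊥, 1, isSignedFamily_bot hmul, Set.empty_subset _⟩ ?_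
  rintro t s ht - - ⟨H, X, hX, hsH⟩
  have htt := hsupp t ht
  obtain ⟨y, hy, hyy⟩ := exists_mem_mul_self_eq_one hmul (hfine 1) htt ht
  refine ⟨H.adjoinInvolution htt, _, hX.adjoinInvolution hmul htt hy hyy fun u hu => ?_,
    Set.insert_subset (Subgroup.mem_adjoinInvolution_self htt)
      (hsH.trans (Subgroup.le_adjoinInvolution htt))⟩
  exact exists_mul_eq_smul_mul_of_mul_self_eq_one hmul hfine (hX.mem u hu)
    (hX.isUnit u hu).ne_zero hy hyy

end InvolutionGrading

theorem stmt19_general (F : Type*) [Field F] [IsAlgClosed F]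
    (G : Type*) [CommGroup G] [DecidableEq G]
    (n : ℕ)
    (R : G → Submodule F (Matrix (Fin n) (Fin n) F))
    (hinternal : DirectSum.IsInternal R)
    (hmul : ∀ a b : G, R a * R b ≤ R (a * b))
    (hfine : ∀ a : G, Module.finrank F (R a) ≤ 1)
    (hsupp : ∀ t : G, R t ≠ ⊥ → t * t = 1) :
    ∃ (X : G → Matrix (Fin n) (Fin n) F) (α : G → G → F),
      (∀ t : G, R t ≠ ⊥ → X t ∈ R t ∧ X t ≠ 0 ∧ R t = Submodule.span F {X t}) ∧
      (∀ t u : G, R t ≠ ⊥ → R u ≠ ⊥ →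
        (α t u = 1 ∨ α t u = -1) ∧ X t * X u = α t u • X (t * u)) ∧
      (∀ u : G, R u ≠ ⊥ →
        X u * X u = α u u • (1 : Matrix (Fin n) (Fin n) F) ∧
        (X u)⁻¹ = α u u • X u) := by
  rcases isEmpty_or_nonempty (Fin n) with hn | hn
  · have hbot (t : G) : R t = ⊥ := Submodule.eq_bot_of_subsingleton
    exact ⟨0, 0, fun t ht => (ht (hbot t)).elim, fun t _ ht => (ht (hbot t)).elim,
      fun t ht => (ht (hbot t)).elim⟩
  let := hinternal.chooseDecomposition
  obtain ⟨H, X, hX, hH⟩ := exists_isSignedFamily hmul hfine hsupp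
  choose! α hα hαX using hX.mul
  refine ⟨X, α, fun t ht => ?_, fun t u ht hu => ?_, fun u hu => ?_⟩
  · have hX0 := (hX.isUnit t (hH t ht)).ne_zero
    exact ⟨hX.mem t (hH t ht), hX0,
      Submodule.eq_span_singleton_of_finrank_le_one_s19 (hfine t) (hX.mem t (hH t ht)) hX0⟩
  · exact ⟨mul_self_eq_one_iff.mp (hα t (hH t ht) u (hH u hu)), hαX t (hH t ht) u (hH u hu)⟩
  · have hsq : X u * X u = α u u • 1 := by
      rw [hαX u (hH u hu) u (hH u hu), hsupp u hu, hX.map_one]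
    refine ⟨hsq, Matrix.inv_eq_right_inv ?_⟩
    rw [mul_smul_comm, hsq, smul_smul, hα u (hH u hu) u (hH u hu), one_smul]

/-- If `M_n(F) = ⊕_g R_g` is a fine `G`-grading (`F` algebraically
closed, char F ≠ 2, `G` abelian) whose support `T = {g : R_g ≠ 0}` consists of
elements with `t² = e`, then there are homogeneous elements `X_t ∈ R_t` spanning the
components (hence forming a basis of `M_n(F)`) and signs `α(t,u) ∈ {1, −1}` such that
`X_t X_u = α(t,u) X_{tu}` for all `t, u ∈ T`; in particular `X_u² = α(u,u) I` and
`X_u⁻¹ = α(u,u) X_u` for every `u ∈ T`. -/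
theorem stmt19 (F : Type*) [Field F] [IsAlgClosed F] (hchar : (2 : F) ≠ 0)
    (G : Type*) [CommGroup G] [DecidableEq G]
    (n : ℕ)
    (R : G → Submodule F (Matrix (Fin n) (Fin n) F))
    (hinternal : DirectSum.IsInternal R)
    (hmul : ∀ a b : G, R a * R b ≤ R (a * b))
    (hfine : ∀ a : G, Module.finrank F (R a) ≤ 1)
    (hsupp : ∀ t : G, R t ≠ ⊥ → t * t = 1) :
    ∃ (X : G → Matrix (Fin n) (Fin n) F) (α : G → G → F),
      (∀ t : G, R t ≠ ⊥ → X t ∈ R t ∧ X t ≠ 0 ∧ R t = Submodule.span F {X t}) ∧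
      (∀ t u : G, R t ≠ ⊥ → R u ≠ ⊥ →
        (α t u = 1 ∨ α t u = -1) ∧ X t * X u = α t u • X (t * u)) ∧
      (∀ u : G, R u ≠ ⊥ →
        X u * X u = α u u • (1 : Matrix (Fin n) (Fin n) F) ∧
        (X u)⁻¹ = α u u • X u) :=
  stmt19_general F G n R hinternal hmul hfine hsupp
end
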